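/- arXiv:1712.05379 — 14 statements merged into one kernel-verified Lean document; each statement's English description precedes it below -/
import Mathlib

section
/- Let f : X → ℝ be a bounded function on a metric space (X,d), bounded below by 0 and above by s, and suppose f satisfies: d(x,y) < δ implies |f(x) − f(y)| ≤ ε (for given δ > 0 and ε ∈ (0,1]). Define k = (s+ε)/δ and f_k(x) = inf_{y∈X} (f(y) + k·d(x,y)). Then f_k is k-Lipschitz and ‖f − f_k‖_∞ ≤ ε. -/
open Filter Topology

/-- The infimal convolution `f_k(x) = inf_y (f(y) + k d(x,y))` of a function
`0 ≤ f ≤ s` with modulus `d(x,y) < δ → |f(x) − f(y)| ≤ ε`, where `k = (s+ε)/δ`,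
is `k`-Lipschitz and satisfies `‖f − f_k‖_∞ ≤ ε`. -/
theorem stmt1 {X : Type*} [MetricSpace X] [Nonempty X] (f : X → ℝ) (s δ ε k : ℝ)
    (hf0 : ∀ x, 0 ≤ f x) (hfs : ∀ x, f x ≤ s)
    (hδ : 0 < δ) (hε0 : 0 < ε) (hε1 : ε ≤ 1)
    (hmod : ∀ x y, dist x y < δ → |f x - f y| ≤ ε)
    (hk : k = (s + ε) / δ) (fk : X → ℝ)
    (hfk : ∀ x, fk x = ⨅ y : X, (f y + k * dist x y)) :
    (∀ x y, |fk x - fk y| ≤ k * dist x y) ∧ (∀ x, |f x - fk x| ≤ ε) := by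
  have hs : 0 ≤ s := le_trans (hf0 (Classical.arbitrary X)) (hfs _)
  have hk0 : 0 ≤ k := by rw [hk]; positivity
  have hkδ : k * δ = s + ε := by rw [hk]; field_simp
  have hbdd : ∀ x : X, BddBelow (Set.range fun y => f y + k * dist x y) := by
    intro x
    refine ⟨0, ?_⟩
    rintro _ ⟨y, rfl⟩
    exact add_nonneg (hf0 y) (mul_nonneg hk0 dist_nonneg)
  have fk_le : ∀ x y : X, fk x ≤ f y + k * dist x y := by
    intro x y
    rw [hfk x]
    exact ciInf_le (hbdd x) y
  have le_fk : ∀ x : X, f x - ε ≤ fk x := by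
    intro x
    rw [hfk x]
    apply le_ciInf
    intro y
    by_cases h : dist x y < δ
    · have := abs_le.1 (hmod x y h)
      have : 0 ≤ k * dist x y := mul_nonneg hk0 dist_nonneg
      have := abs_le.1 (hmod x y h)
      nlinarith
    · push_neg at h
      have h1 : k * δ ≤ k * dist x y := mul_le_mul_of_nonneg_left h hk0
      have := hf0 y
      have := hfs x
      nlinarith
  have fk_le_f : ∀ x : X, fk x ≤ f x := by
    intro x
    have := fk_le x x
    simpa using this
  have lip : ∀ x y : X, fk x ≤ fk y + k * dist x y := by
    intro x y
    have : fk x - k * dist x y ≤ fk y := by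
      rw [hfk y]
      apply le_ciInf
      intro z
      have h1 := fk_le x z
      have h2 : dist x z ≤ dist x y + dist y z := dist_triangle x y z
      nlinarith
    linarith
  refine ⟨fun x y => abs_le.2 ⟨?_, ?_⟩, fun x => abs_le.2 ⟨?_, ?_⟩⟩
  · have := lip y x
    rw [dist_comm y x] at this
    linarith
  · have := lip x y
    linarith
  · have := fk_le_f x
    linarith
  · have := le_fk x
    linarith
end

section
/- Let G be a topological group. If for every neighborhood U of the identity there exists a finite subset F ⊆ G with G = F·U·F, then G is precompact (totally bounded in its two-sided uniformity). -/
/-!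
Choose a symmetric `V ∈ 𝓝 1` with `V * V ⊆ U` and a cover `G = A * V * B` with `A`, `B` finite;
we show `G = V⁻¹ * V * C` for a finite `C`, by induction on `A`. Let `A = insert a A'`. If some
`A' * V * H` with `H` finite is all of `G`, recurse. Otherwise, for any `z` the set
`H = B ∪ B z⁻¹ B` misses some `g`, which forces both `g = a u f` and `g f⁻¹ z = a u z` to lie in
`a V B`; cancelling `a u` gives `z ∈ V⁻¹ V B`.
-/

open Filter Topology Pointwise Set

section Group

variable {G : Type*} [Group G]

theorem mem_inv_mul_mul_of_insert_mul_mul_eq_univ {V A B : Set G} {a z : G}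
    (hcov : insert a A * V * B = univ) (hA : A * V * (B ∪ B * {z⁻¹} * B) ≠ univ) :
    z ∈ V⁻¹ * V * B := by
  have exists_of_notMem {x : G} (hx : x ∉ A * V * B) : ∃ u ∈ V, ∃ b ∈ B, a * u * b = x := by
    obtain ⟨_, ⟨a', ha', u, hu, rfl⟩, b, hb, rfl⟩ : x ∈ insert a A * V * B := hcov ▸ mem_univ x
    obtain rfl | ha' := ha'
    · exact ⟨u, hu, b, hb, rfl⟩
    · exact absurd (Set.mul_mem_mul (Set.mul_mem_mul ha' hu) hb) hx
  obtain ⟨g, hg⟩ := (ne_univ_iff_exists_notMem _).1 hA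
  obtain ⟨u, hu, f, hf, rfl⟩ :=
    exists_of_notMem fun h ↦ hg (mul_subset_mul_left subset_union_left h)
  obtain ⟨w, hw, b, hb, hwb⟩ : ∃ w ∈ V, ∃ b ∈ B, a * w * b = a * u * z := by
    refine exists_of_notMem fun ⟨_, ⟨a', ha', v, hv, rfl⟩, b', hb', hx⟩ ↦ hg ?_
    replace hx : a' * v * b' = a * u * z := hx
    have : a * u * f = a' * v * (b' * z⁻¹ * f) := by
      rw [show a * u = a' * v * b' * z⁻¹ by rw [hx]; group]; group
    rw [this]
    exact Set.mul_mem_mul (Set.mul_mem_mul ha' hv) <| Or.inr <|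
      Set.mul_mem_mul (Set.mul_mem_mul hb' (mem_singleton _)) hf
  refine ⟨u⁻¹ * w, Set.mul_mem_mul (inv_mem_inv.2 hu) hw, b, hb, ?_⟩
  simp only [mul_assoc, mul_right_inj] at hwb
  show u⁻¹ * w * b = z
  rw [mul_assoc, hwb, inv_mul_cancel_left]

theorem exists_finite_inv_mul_mul_eq_univ (V : Set G) {A B : Set G} (hA : A.Finite)
    (hB : B.Finite) (hcov : A * V * B = univ) :
    ∃ C : Set G, C.Finite ∧ V⁻¹ * V * C = univ := by
  induction A, hA using Set.Finite.induction_on generalizing B with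
  | empty => simp [eq_comm (a := ∅)] at hcov
  | @insert a A _ _ ih =>
    by_cases hA : ∃ H : Set G, H.Finite ∧ A * V * H = univ
    · obtain ⟨H, hH, hAH⟩ := hA
      exact ih hH hAH
    · refine ⟨B, hB, eq_univ_of_forall fun z ↦ ?_⟩
      exact mem_inv_mul_mul_of_insert_mul_mul_eq_univ hcov fun hAH ↦
        hA ⟨_, hB.union ((hB.mul (finite_singleton _)).mul hB), hAH⟩

end Group

/-- Uspenskij–Solecki criterion: if for every identity neighborhood `U` there is a
finite `F` with `G = F·U·F`, then `G` is precompact, i.e. for every identity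
neighborhood `U` there is a finite `F` with `G = U·F`. -/
theorem stmt3 {G : Type*} [Group G] [TopologicalSpace G] [IsTopologicalGroup G]
    (h : ∀ U ∈ 𝓝 (1 : G), ∃ F : Finset G, ∀ g : G,
      ∃ f₁ ∈ F, ∃ u ∈ U, ∃ f₂ ∈ F, g = f₁ * u * f₂) :
    ∀ U ∈ 𝓝 (1 : G), ∃ F : Finset G, ∀ g : G, ∃ u ∈ U, ∃ f ∈ F, g = u * f := by
  intro U hU
  obtain ⟨V, hV, -, hVinv, hVU⟩ := exists_closed_nhds_one_inv_eq_mul_subset hU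
  obtain ⟨F, hF⟩ := h V hV
  have hcov : (F : Set G) * V * (F : Set G) = univ :=
    eq_univ_of_forall fun g ↦ by
      obtain ⟨f₁, hf₁, u, hu, f₂, hf₂, rfl⟩ := hF g
      exact Set.mul_mem_mul (Set.mul_mem_mul hf₁ hu) hf₂
  obtain ⟨C, hC, hVC⟩ := exists_finite_inv_mul_mul_eq_univ V F.finite_toSet F.finite_toSet hcov
  refine ⟨hC.toFinset, fun g ↦ ?_⟩
  obtain ⟨x, hx, c, hc, rfl⟩ : g ∈ V⁻¹ * V * C := hVC ▸ mem_univ g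
  exact ⟨x, hVU (by rwa [hVinv] at hx), c, hC.mem_toFinset.2 hc, rfl⟩
end

section
/- Let G be a topological group. If for every neighborhood U of the identity there exists a compact subset K ⊆ G with G = K·U·K, then G is precompact. -/
open Filter Topology Set Pointwise

/-!
Cover the compact set `K` by finitely many translates `a • V` and `V <• b`; then
`G = K * V * K = A * S * B` with `S = V * V * V` and `A`, `B` finite. Whenever `G = A * S * C`
with `A`, `C` finite, finitely many right translates of `S⁻¹ * S` cover `G` (a variant of
B. H. Neumann's lemma): if `g ∉ S⁻¹ * S * C`, then `a * S * g` misses `a * S * C`, so it lies in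
the other pieces, and hence so does `a * S * C ⊆ a * S * g * g⁻¹ * C`. This removes `a` from `A`
at the cost of enlarging `C` to `C ∪ C * {g⁻¹} * C`, and we induct on `A`. Choosing `V` with
`S⁻¹ * S ⊆ U` then gives `G = U * E` with `E` finite.
-/

section Group

variable {G : Type*} [Group G]

theorem exists_finite_inv_mul_mul_eq_univ_of_finite_mul_mul_eq_univ
    {S A C : Set G} (hA : A.Finite) (hC : C.Finite) (hcover : A * S * C = univ) :
    ∃ E : Set G, E.Finite ∧ S⁻¹ * S * E = univ := by
  induction A, hA using Set.Finite.induction_on generalizing C with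
  | empty =>
    rw [empty_mul, empty_mul] at hcover
    exact absurd hcover empty_ne_univ
  | @insert a A _ _ ih =>
    by_cases hdone : S⁻¹ * S * C = univ
    · exact ⟨C, hC, hdone⟩
    obtain ⟨g, hg⟩ := (ne_univ_iff_exists_notMem _).1 hdone
    have hcov (y : G) : ∃ b ∈ insert a A, ∃ s ∈ S, ∃ c ∈ C, b * s * c = y := by
      obtain ⟨_, ⟨b, hb, s, hs, rfl⟩, c, hc, hy⟩ := hcover ▸ mem_univ y
      exact ⟨b, hb, s, hs, c, hc, hy⟩
    refine ih (hC.union ((hC.mul (finite_singleton g⁻¹)).mul hC)) (eq_univ_of_forall fun x => ?_)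
    obtain ⟨b, hb, s, hs, c, hc, rfl⟩ := hcov x
    rcases hb with rfl | hb
    · obtain ⟨b', hb', s', hs', c', hc', hy⟩ := hcov (b * s * g)
      rcases hb' with rfl | hb'
      · refine absurd ?_ hg
        have : g = s⁻¹ * s' * c' := by
          rw [mul_assoc b' s' c', mul_assoc b' s g, mul_left_cancel_iff] at hy
          rw [mul_assoc, hy, inv_mul_cancel_left]
        exact this ▸ mul_mem_mul (mul_mem_mul (inv_mem_inv.2 hs) hs') hc'
      · have : b * s * c = b' * s' * (c' * g⁻¹ * c) := by
          rw [← mul_assoc, ← mul_assoc, hy]; group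
        exact this ▸ mul_mem_mul (mul_mem_mul hb' hs')
          (Or.inr (mul_mem_mul (mul_mem_mul hc' rfl) hc))
    · exact mul_mem_mul (mul_mem_mul hb hs) (Or.inl hc)

end Group

section TopologicalGroup

variable {G : Type*} [Group G] [TopologicalSpace G] [IsTopologicalGroup G]

theorem exists_nhds_one_cube_inv_mul_cube_subset {U : Set G} (hU : U ∈ 𝓝 (1 : G)) :
    ∃ V ∈ 𝓝 (1 : G), (V * V * V)⁻¹ * (V * V * V) ⊆ U := by
  obtain ⟨N, hN, -, hNinv, hNU⟩ := exists_closed_nhds_one_inv_eq_mul_subset hU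
  obtain ⟨M, hM, -, -, hMN⟩ := exists_closed_nhds_one_inv_eq_mul_subset hN
  obtain ⟨V, hV, -, -, hVM⟩ := exists_closed_nhds_one_inv_eq_mul_subset hM
  have hV3 : V * V * V ⊆ N :=
    calc V * V * V ⊆ M * M :=
          mul_subset_mul hVM ((subset_mul_right V (mem_of_mem_nhds hV)).trans hVM)
      _ ⊆ N := hMN
  refine ⟨V, hV, ?_⟩
  calc (V * V * V)⁻¹ * (V * V * V) ⊆ N⁻¹ * N := mul_subset_mul (inv_subset_inv.2 hV3) hV3
    _ = N * N := by rw [hNinv]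
    _ ⊆ U := hNU

theorem IsCompact.exists_subset_finite_mul {K V : Set G} (hK : IsCompact K) (hV : V ∈ 𝓝 (1 : G)) :
    ∃ A : Set G, A.Finite ∧ K ⊆ A * V := by
  obtain ⟨t, -, ht⟩ := hK.elim_nhds_subcover (fun x => x • V) fun _ _ => smul_mem_nhds_self.2 hV
  exact ⟨t, t.finite_toSet, ht.trans_eq (iUnion_smul_left_image ..)⟩

theorem IsCompact.exists_subset_mul_finite {K V : Set G} (hK : IsCompact K) (hV : V ∈ 𝓝 (1 : G)) :
    ∃ B : Set G, B.Finite ∧ K ⊆ V * B := by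
  obtain ⟨A, hA, hKA⟩ := hK.inv.exists_subset_finite_mul (inv_mem_nhds_one G hV)
  refine ⟨A⁻¹, hA.inv, ?_⟩
  rwa [← inv_inv V, ← mul_inv_rev, ← inv_subset]

end TopologicalGroup

/-- If for every identity neighborhood `U` there is a compact `K ⊆ G` with
`G = K·U·K`, then `G` is precompact. -/
theorem stmt4 {G : Type*} [Group G] [TopologicalSpace G] [IsTopologicalGroup G]
    (h : ∀ U ∈ 𝓝 (1 : G), ∃ K : Set G, IsCompact K ∧ ∀ g : G,
      ∃ k₁ ∈ K, ∃ u ∈ U, ∃ k₂ ∈ K, g = k₁ * u * k₂) :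
    ∀ U ∈ 𝓝 (1 : G), ∃ F : Finset G, ∀ g : G, ∃ u ∈ U, ∃ f ∈ F, g = u * f := by
  intro U hU
  obtain ⟨V, hV, hVU⟩ := exists_nhds_one_cube_inv_mul_cube_subset hU
  obtain ⟨K, hK, hKVK⟩ := h V hV
  obtain ⟨A, hA, hKA⟩ := hK.exists_subset_finite_mul hV
  obtain ⟨B, hB, hKB⟩ := hK.exists_subset_mul_finite hV
  have hcover : A * (V * V * V) * B = univ := by
    refine eq_univ_of_forall fun g => ?_
    obtain ⟨k₁, hk₁, u, hu, k₂, hk₂, rfl⟩ := hKVK g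
    simpa only [mul_assoc] using mul_mem_mul (mul_mem_mul (hKA hk₁) hu) (hKB hk₂)
  obtain ⟨E, hE, hEcover⟩ :=
    exists_finite_inv_mul_mul_eq_univ_of_finite_mul_mul_eq_univ hA hB hcover
  refine ⟨hE.toFinset, fun g => ?_⟩
  obtain ⟨w, hw, f, hf, rfl⟩ := hEcover ▸ mem_univ g
  exact ⟨w, hVU hw, f, hE.mem_toFinset.2 hf, rfl⟩
end

section
/- Let G be a non-precompact topological group. Then there exists a neighborhood U of the identity such that for every sequence (K_n) of compact subsets of G there exists a sequence (g_n) of elements of G with U·K_m·g_m ∩ U·K_n·g_n = ∅ whenever m ≠ n. -/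
/-!
If `K * V * L = G` for compact `K`, `L`, covering `K` and `L` by finitely many translates of a
small `W ∈ 𝓝 1` writes `G` as a finite union of two-sided translates `a * W³ * b`. A B. H. Neumann
type argument turns such a cover into finitely many right translates of `(W³)⁻¹ * W³`, which for
small `W` lies in the neighborhood `U₀` witnessing non-precompactness: a contradiction. Hence some `V ∈ 𝓝 1` satisfies `K * V * L ≠ G` for all compact
`K`, `L` (Uspenskij–Solecki), and this lets one choose `g n` greedily so that `U * K n * {g n}`
misses `U * ⋃ m < n, K m * {g m}`, the latter set being compact.
-/

open Filter Topology Pointwise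

open Set

theorem exists_seq_of_forall_fin_exists {α : Type*} (r : ℕ → α → ℕ → α → Prop)
    (h : ∀ n (f : Fin n → α), ∃ x, ∀ m : Fin n, r m (f m) n x) :
    ∃ f : ℕ → α, ∀ m n, m < n → r m (f m) n (f n) := by
  choose next hnext using h
  let f : ℕ → α := Nat.strongRec fun n prev => next n fun m => prev m m.2
  refine ⟨f, fun m n hmn => ?_⟩
  have hf : f n = next n fun m : Fin n => f m := Nat.strongRec_eq _ n
  rw [hf]
  exact hnext n (fun m => f m) ⟨m, hmn⟩

section Group

variable {G : Type*} [Group G]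

theorem exists_finset_inv_mul_mul_eq_univ {V : Set G} {A B : Finset G}
    (h : (A : Set G) * V * (B : Set G) = univ) : ∃ F : Finset G, V⁻¹ * V * (F : Set G) = univ := by
  classical
  induction A using Finset.induction_on generalizing B with
  | empty => exact (empty_ne_univ (by simpa using h)).elim
  | insert a A ha ih =>
    by_cases hB : V⁻¹ * V * (B : Set G) = univ
    · exact ⟨B, hB⟩
    obtain ⟨y, hy⟩ := (ne_univ_iff_exists_notMem _).1 hB
    have hcov : ∀ z : G, ∃ c, (c = a ∨ c ∈ A) ∧ ∃ v ∈ V, ∃ b ∈ B, c * v * b = z := by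
      intro z
      have := h ▸ mem_univ z
      simp only [Set.mem_mul, Finset.coe_insert, mem_insert_iff, Finset.mem_coe] at this
      aesop
    -- As `y ∉ V⁻¹ * V * B`, `a * V * {y}` misses `a * V * B`, so it lies in `A * V * B`; hence
    -- `a * V * B ⊆ a * V * {y} * {y⁻¹} * B ⊆ A * V * (B * {y⁻¹} * B)`.
    refine ih (B := B ∪ B * {y⁻¹} * B) (eq_univ_of_forall fun x => ?_)
    obtain ⟨c, rfl | hc, v, hv, b, hb, rfl⟩ := hcov x
    · obtain ⟨c', rfl | hc', v', hv', b', hb', he⟩ := hcov (c * v * y)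
      · have hy' : y = v⁻¹ * v' * b' := calc
          y = v⁻¹ * (c'⁻¹ * (c' * v * y)) := by group
          _ = v⁻¹ * v' * b' := by rw [← he]; group
        exact (hy (hy' ▸ mul_mem_mul (mul_mem_mul (inv_mem_inv.2 hv) hv') hb')).elim
      · have hb'' : b' * y⁻¹ * b ∈ B ∪ B * {y⁻¹} * B :=
          Finset.mem_union_right _ (Finset.mul_mem_mul (Finset.mul_mem_mul hb'
            (Finset.mem_singleton_self _)) hb)
        have hx : c * v * b = c' * v' * (b' * y⁻¹ * b) := calc
          c * v * b = c * v * y * (y⁻¹ * b) := by group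
          _ = c' * v' * (b' * y⁻¹ * b) := by rw [← he]; group
        exact hx ▸ mul_mem_mul (mul_mem_mul hc' hv') hb''
    · exact mul_mem_mul (mul_mem_mul hc hv) (Finset.mem_union_left _ hb)

end Group

section TopologicalGroup

variable {G : Type*} [Group G] [TopologicalSpace G] [IsTopologicalGroup G]

theorem exists_nhds_one_mul_mul_subset {U : Set G} (hU : U ∈ 𝓝 1) :
    ∃ W ∈ 𝓝 1, W * W * W ⊆ U := by
  obtain ⟨W₁, hW₁o, hW₁1, hW₁⟩ := exists_open_nhds_one_mul_subset hU
  obtain ⟨W, hWo, hW1, hW⟩ := exists_open_nhds_one_mul_subset (hW₁o.mem_nhds hW₁1)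
  refine ⟨W, hWo.mem_nhds hW1, ?_⟩
  exact (mul_subset_mul hW ((subset_mul_left W hW1).trans hW)).trans hW₁

theorem IsCompact.exists_finset_mul_subset {K W : Set G} (hK : IsCompact K) (hW : W ∈ 𝓝 1) :
    ∃ A : Finset G, K ⊆ A * W := by
  obtain ⟨A, -, hA⟩ := hK.elim_nhds_subcover (fun a => (a * ·) '' W)
    fun a _ => by simpa only [← map_mul_left_nhds_one a] using image_mem_map hW
  exact ⟨A, hA.trans_eq (by simpa using iUnion_mul_left_image (s := (A : Set G)) (t := W))⟩

theorem IsCompact.exists_finset_subset_mul {K W : Set G} (hK : IsCompact K) (hW : W ∈ 𝓝 1) :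
    ∃ B : Finset G, K ⊆ W * B := by
  obtain ⟨B, -, hB⟩ := hK.elim_nhds_subcover (fun b => (· * b) '' W)
    fun b _ => by simpa only [← map_mul_right_nhds_one b] using image_mem_map hW
  exact ⟨B, hB.trans_eq (by simpa using iUnion_mul_right_image (s := W) (t := (B : Set G)))⟩

theorem exists_nhds_one_forall_isCompact_mul_mul_ne_univ {U₀ : Set G} (hU₀ : U₀ ∈ 𝓝 1)
    (hU₀F : ∀ F : Finset G, U₀ * (F : Set G) ≠ univ) :
    ∃ V ∈ 𝓝 1, ∀ K L : Set G, IsCompact K → IsCompact L → K * V * L ≠ univ := by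
  obtain ⟨S, hS, -, hSinv, hSS⟩ := exists_closed_nhds_one_inv_eq_mul_subset hU₀
  obtain ⟨W, hW, hWS⟩ := exists_nhds_one_mul_mul_subset hS
  refine ⟨W, hW, fun K L hK hL hKL => ?_⟩
  obtain ⟨A, hA⟩ := hK.exists_finset_mul_subset hW
  obtain ⟨B, hB⟩ := hL.exists_finset_subset_mul hW
  have hcov : (A : Set G) * (W * W * W) * (B : Set G) = univ := by
    refine eq_univ_of_univ_subset (hKL ▸ ?_)
    calc K * W * L ⊆ A * W * W * (W * B) := by gcongr
      _ = A * (W * W * W) * B := by simp only [mul_assoc]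
  obtain ⟨F, hF⟩ := exists_finset_inv_mul_mul_eq_univ hcov
  refine hU₀F F (eq_univ_of_univ_subset (hF ▸ ?_))
  calc (W * W * W)⁻¹ * (W * W * W) * F ⊆ S⁻¹ * S * F := by
        gcongr
        exact inv_subset_inv.2 hWS
    _ ⊆ U₀ * F := by rw [hSinv]; gcongr

theorem exists_nhds_one_forall_isCompact_exists_disjoint {U₀ : Set G} (hU₀ : U₀ ∈ 𝓝 1)
    (hU₀F : ∀ F : Finset G, U₀ * (F : Set G) ≠ univ) :
    ∃ U ∈ 𝓝 1, ∀ K L : Set G, IsCompact K → IsCompact L →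
      ∃ g, Disjoint (U * K * {g}) (U * L) := by
  obtain ⟨V, hV, hKVL⟩ := exists_nhds_one_forall_isCompact_mul_mul_ne_univ hU₀ hU₀F
  obtain ⟨U, hU, -, hUinv, hUU⟩ := exists_closed_nhds_one_inv_eq_mul_subset hV
  refine ⟨U, hU, fun K L hK hL => ?_⟩
  obtain ⟨g, hg⟩ := (ne_univ_iff_exists_notMem _).1 (hKVL K⁻¹ L hK.inv hL)
  refine ⟨g, Set.disjoint_left.2 ?_⟩
  rintro _ ⟨_, ⟨u, hu, k, hk, rfl⟩, g', hg', rfl⟩ ⟨u', hu', l, hl, he⟩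
  simp only [mem_singleton_iff.1 hg'] at he
  have hg_eq : g = k⁻¹ * (u⁻¹ * u') * l := calc
    g = k⁻¹ * u⁻¹ * (u * k * g) := by group
    _ = k⁻¹ * (u⁻¹ * u') * l := by rw [← he]; group
  refine hg (hg_eq ▸ mul_mem_mul (mul_mem_mul (inv_mem_inv.2 hk) (hUU (mul_mem_mul ?_ hu'))) hl)
  exact hUinv ▸ inv_mem_inv.2 hu

end TopologicalGroup

theorem stmt5_general {G : Type*} [Group G] [TopologicalSpace G] [IsTopologicalGroup G]
    (h : ¬ ∀ U ∈ 𝓝 (1 : G), ∃ F : Finset G, ∀ g : G, ∃ u ∈ U, ∃ f ∈ F, g = u * f) :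
    ∃ U ∈ 𝓝 (1 : G), ∀ K : ℕ → Set G, (∀ n, IsCompact (K n)) →
      ∃ g : ℕ → G, ∀ m n : ℕ, m ≠ n →
        (U * K m * {g m}) ∩ (U * K n * {g n}) = ∅ := by
  obtain ⟨U₀, hU₀, hU₀F⟩ : ∃ U₀ ∈ 𝓝 (1 : G), ∀ F : Finset G, U₀ * (F : Set G) ≠ univ := by
    simp_rw [ne_eq, eq_univ_iff_forall, Set.mem_mul]
    simpa [eq_comm] using h
  obtain ⟨U, hU, hsep⟩ := exists_nhds_one_forall_isCompact_exists_disjoint hU₀ hU₀F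
  refine ⟨U, hU, fun K hK => ?_⟩
  have hnext : ∀ n (f : Fin n → G), ∃ x, ∀ m : Fin n,
      Disjoint (U * K m * {f m}) (U * K n * {x}) := by
    intro n f
    obtain ⟨x, hx⟩ := hsep (K n) (⋃ m : Fin n, K m * {f m}) (hK n)
      (isCompact_iUnion fun m => (hK m).mul isCompact_singleton)
    refine ⟨x, fun m => (hx.mono_right ?_).symm⟩
    rw [mul_assoc]
    exact mul_subset_mul_left (subset_iUnion (fun m : Fin n => K m * {f m}) m)
  obtain ⟨g, hg⟩ := exists_seq_of_forall_fin_exists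
    (fun m a n b => Disjoint (U * K m * {a}) (U * K n * {b})) hnext
  refine ⟨g, fun m n hmn => disjoint_iff_inter_eq_empty.1 ?_⟩
  rcases hmn.lt_or_gt with hlt | hlt
  exacts [hg m n hlt, (hg n m hlt).symm]

/-- If a Hausdorff topological group `G` is not precompact, then there is an identity
neighborhood `U` such that for every sequence `(K_n)` of compact subsets there is a
sequence `(g_n)` in `G` with `U·K_m·g_m ∩ U·K_n·g_n = ∅` for `m ≠ n`. -/
theorem stmt5 {G : Type*} [Group G] [TopologicalSpace G] [IsTopologicalGroup G] [T2Space G]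
    (h : ¬ ∀ U ∈ 𝓝 (1 : G), ∃ F : Finset G, ∀ g : G, ∃ u ∈ U, ∃ f ∈ F, g = u * f) :
    ∃ U ∈ 𝓝 (1 : G), ∀ K : ℕ → Set G, (∀ n, IsCompact (K n)) →
      ∃ g : ℕ → G, ∀ m n : ℕ, m ≠ n →
        (U * K m * {g m}) ∩ (U * K n * {g n}) = ∅ :=
  stmt5_general h
end

section
/- Let G be a dense subgroup of a topological group H, and let d be a right-invariant metric on G compatible with the subspace topology. Then there exists a unique continuous map D : H × H → ℝ extending d, and D is a right-invariant metric on H compatible with the topology of H. -/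
/-!
Right invariance turns `d x y` into `d 1 (y * x⁻¹)`, so `d` is uniformly small on the right
uniformity of `G`; by the quadrilateral inequality `|d a b - d a' b'| ≤ d a a' + d b b'` the map
`(a, b) ↦ d a b` is then uniformly continuous on `G × G` and extends continuously to `H × H`.
The metric axioms and right invariance are closed conditions, so they pass from the dense set `G`
to `H`. For compatibility, a closed neighbourhood `C` of `1` contains some `{y ∈ G | d 1 y < ε}`;
the open `D`-ball of radius `ε` lies in the closure of its trace on `G`, hence in `C`.
-/

open Filter Topology
open scoped Uniformity

lemma Filter.hasBasis_biInf_Ioi_principal {α : Type*} {s : ℝ → Set α} (hs : Monotone s) :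
    (⨅ ε ∈ Set.Ioi (0 : ℝ), 𝓟 (s ε)).HasBasis (fun ε => 0 < ε) s :=
  hasBasis_biInf_principal'
    (fun ε hε δ hδ =>
      ⟨min ε δ, Set.mem_Ioi.2 (lt_min hε hδ), hs (min_le_left _ _), hs (min_le_right _ _)⟩)
    ⟨1, Set.mem_Ioi.2 one_pos⟩

lemma uniformContinuous_of_forall_eventually_lt {X : Type*} [UniformSpace X] {d : X → X → ℝ}
    (hsymm : ∀ x y, d x y = d y x) (htri : ∀ x y z, d x z ≤ d x y + d y z)
    (hsmall : ∀ ε > 0, ∀ᶠ p in 𝓤 X, d p.1 p.2 < ε) :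
    UniformContinuous fun p : X × X => d p.1 p.2 := by
  rw [UniformContinuous, Metric.uniformity_basis_dist.tendsto_right_iff]
  intro ε hε
  filter_upwards [uniformContinuous_fst.eventually (hsmall (ε / 2) (half_pos hε)),
    uniformContinuous_snd.eventually (hsmall (ε / 2) (half_pos hε))]
  rintro ⟨⟨a, b⟩, ⟨a', b'⟩⟩ (haa' : d a a' < ε / 2) (hbb' : d b b' < ε / 2)
  dsimp only
  rw [Real.dist_eq, abs_sub_lt_iff]
  constructor <;> linarith [htri a a' b, htri a' b' b, htri a' a b', htri a b b', hsymm a a',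
    hsymm b b']

section RightUniformity

attribute [local instance] IsTopologicalGroup.rightUniformSpace

variable {H : Type*} [Group H] [TopologicalSpace H] [IsTopologicalGroup H] {G : Subgroup H}
  {d : H → H → ℝ}

lemma Subgroup.eventually_uniformity_apply_lt
    (hinv : ∀ x ∈ G, ∀ y ∈ G, ∀ g ∈ G, d (x * g) (y * g) = d x y)
    (hsmall : ∀ ε > 0, {y ∈ (G : Set H) | d 1 y < ε} ∈ 𝓝[(G : Set H)] 1) {ε : ℝ} (hε : 0 < ε) :
    ∀ᶠ p in 𝓤 G, d p.1 p.2 < ε := by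
  obtain ⟨S, hS, hSG⟩ := mem_nhdsWithin_iff_exists_mem_nhds_inter.1 (hsmall ε hε)
  have hS' : ∀ᶠ p in 𝓤 H, p.2 * p.1⁻¹ ∈ S := preimage_mem_comap hS
  rw [uniformity_subtype]
  filter_upwards [hS'.comap _] with ⟨a, b⟩ hab
  have hbaG : (b : H) * (a : H)⁻¹ ∈ G := G.mul_mem b.2 (G.inv_mem a.2)
  have hshift := hinv a a.2 b b.2 (a : H)⁻¹ (G.inv_mem a.2)
  rw [mul_inv_cancel] at hshift
  exact hshift ▸ (hSG ⟨hab, hbaG⟩).2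

lemma Subgroup.exists_continuous_extension (hG : Dense (G : Set H))
    (hsymm : ∀ x ∈ G, ∀ y ∈ G, d x y = d y x)
    (htri : ∀ x ∈ G, ∀ y ∈ G, ∀ z ∈ G, d x z ≤ d x y + d y z)
    (hinv : ∀ x ∈ G, ∀ y ∈ G, ∀ g ∈ G, d (x * g) (y * g) = d x y)
    (hsmall : ∀ ε > 0, {y ∈ (G : Set H) | d 1 y < ε} ∈ 𝓝[(G : Set H)] 1) :
    ∃ D : H → H → ℝ, Continuous (fun p : H × H => D p.1 p.2) ∧
      ∀ x ∈ G, ∀ y ∈ G, D x y = d x y := by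
  have hunif : UniformContinuous fun p : G × G => d p.1 p.2 :=
    uniformContinuous_of_forall_eventually_lt (d := fun a b : G => d a b)
      (fun a b => hsymm a a.2 b b.2) (fun a b c => htri a a.2 b b.2 c c.2)
      (fun _ hε => G.eventually_uniformity_apply_lt hinv hsmall hε)
  have hind : IsUniformInducing fun p : G × G => ((p.1 : H), (p.2 : H)) :=
    (isUniformInducing_val _).prod (isUniformInducing_val _)
  have hdense := hG.denseRange_val.prodMap hG.denseRange_val
  exact ⟨fun x y => (hind.isDenseInducing hdense).extend _ (x, y),
    (uniformContinuous_uniformly_extend hind hdense hunif).continuous,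
    fun x hx y hy => uniformly_extend_of_ind hind hdense hunif (⟨x, hx⟩, ⟨y, hy⟩)⟩

end RightUniformity

lemma hasBasis_nhds_of_hasBasis_nhds_one {H : Type*} [Group H] [TopologicalSpace H]
    [IsTopologicalGroup H] {D : H → H → ℝ} (hinv : ∀ x y g : H, D (x * g) (y * g) = D x y)
    (h1 : (𝓝 (1 : H)).HasBasis (fun ε => 0 < ε) fun ε => {y | D 1 y < ε}) (x : H) :
    (𝓝 x).HasBasis (fun ε => 0 < ε) fun ε => {y | D x y < ε} := by
  have hshift (y : H) : D 1 (y * x⁻¹) = D x y := by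
    simpa only [mul_inv_cancel] using hinv x y x⁻¹
  simpa only [← nhds_translation_mul_inv x, Set.preimage_ofPred_eq, hshift] using h1.comap (· * x⁻¹)

namespace Subgroup

variable {H : Type*} [Group H] [TopologicalSpace H] {G : Subgroup H} (hG : Dense (G : Set H))
  {d D : H → H → ℝ} (hD : Continuous fun p : H × H => D p.1 p.2)
  (hDd : ∀ x ∈ G, ∀ y ∈ G, D x y = d x y)
include hG hD hDd

lemma eq_of_continuous_of_eqOn {D' : H → H → ℝ} (hD' : Continuous fun p : H × H => D' p.1 p.2)
    (hD'd : ∀ x ∈ G, ∀ y ∈ G, D' x y = d x y) : D' = D :=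
  funext₂ fun x y => hG.denseRange_val.induction_on₂ (isClosed_eq hD' hD)
    (fun a b => by rw [hD'd a a.2 b b.2, hDd a a.2 b b.2]) x y

lemma extension_symm (hsymm : ∀ x ∈ G, ∀ y ∈ G, d x y = d y x) (x y : H) : D x y = D y x :=
  hG.denseRange_val.induction_on₂ (isClosed_eq hD (hD.comp continuous_swap))
    (fun a b => by rw [hDd a a.2 b b.2, hDd b b.2 a a.2, hsymm a a.2 b b.2]) x y

lemma extension_nonneg (hpos : ∀ x ∈ G, ∀ y ∈ G, 0 ≤ d x y) (x y : H) : 0 ≤ D x y :=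
  hG.denseRange_val.induction_on₂ (isClosed_le continuous_const hD)
    (fun a b => hDd a a.2 b b.2 ▸ hpos a a.2 b b.2) x y

lemma extension_self (hself : ∀ x ∈ G, d x x = 0) (x : H) : D x x = 0 :=
  hG.denseRange_val.induction_on x
    (isClosed_eq (hD.comp₂ continuous_id continuous_id) continuous_const)
    (fun a => (hDd a a.2 a a.2).trans (hself a a.2))

lemma extension_triangle (htri : ∀ x ∈ G, ∀ y ∈ G, ∀ z ∈ G, d x z ≤ d x y + d y z)
    (x y z : H) : D x z ≤ D x y + D y z :=
  hG.denseRange_val.induction_on₃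
    (isClosed_le (hD.comp₂ continuous_fst (continuous_snd.comp continuous_snd))
      ((hD.comp₂ continuous_fst (continuous_fst.comp continuous_snd)).add
        (hD.comp₂ (continuous_fst.comp continuous_snd) (continuous_snd.comp continuous_snd))))
    (fun a b c => by
      rw [hDd a a.2 c c.2, hDd a a.2 b b.2, hDd b b.2 c c.2]
      exact htri a a.2 b b.2 c c.2) x y z

lemma extension_mul_right [ContinuousMul H]
    (hinv : ∀ x ∈ G, ∀ y ∈ G, ∀ g ∈ G, d (x * g) (y * g) = d x y) (x y g : H) :
    D (x * g) (y * g) = D x y :=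
  hG.denseRange_val.induction_on₃
    (isClosed_eq
      (hD.comp₂ (continuous_fst.mul (continuous_snd.comp continuous_snd))
        ((continuous_fst.comp continuous_snd).mul (continuous_snd.comp continuous_snd)))
      (hD.comp₂ continuous_fst (continuous_fst.comp continuous_snd)))
    (fun a b c => by
      rw [hDd _ (G.mul_mem a.2 c.2) _ (G.mul_mem b.2 c.2), hDd a a.2 b b.2]
      exact hinv a a.2 b b.2 c c.2) x y g

lemma hasBasis_nhds_one_extension [RegularSpace H]
    (hbasis : (𝓝[(G : Set H)] 1).HasBasis (fun ε => 0 < ε) fun ε => {y ∈ (G : Set H) | d 1 y < ε})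
    (hD1 : D 1 1 = 0) : (𝓝 (1 : H)).HasBasis (fun ε => 0 < ε) fun ε => {y | D 1 y < ε} := by
  have hopen (ε : ℝ) : IsOpen {y | D 1 y < ε} :=
    isOpen_lt (hD.comp₂ continuous_const continuous_id) continuous_const
  refine ⟨fun W => ⟨fun hW => ?_, fun ⟨ε, hε, hsub⟩ => ?_⟩⟩
  · obtain ⟨C, hC, hCclosed, hCW⟩ := exists_mem_nhds_isClosed_subset hW
    obtain ⟨ε, hε, hεC⟩ := hbasis.mem_iff.1 (mem_nhdsWithin_of_mem_nhds hC)
    have htrace : {y | D 1 y < ε} ∩ G ⊆ C := fun y ⟨hy, hyG⟩ =>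
      hεC ⟨hyG, hDd 1 G.one_mem y hyG ▸ hy⟩
    exact ⟨ε, hε, (hG.open_subset_closure_inter (hopen ε)).trans
      ((hCclosed.closure_subset_iff.2 htrace).trans hCW)⟩
  · exact mem_of_superset ((hopen ε).mem_nhds (by rwa [Set.mem_ofPred_eq, hD1])) hsub

end Subgroup

lemma eq_iff_of_hasBasis_nhds {X : Type*} [TopologicalSpace X] [T1Space X] {D : X → X → ℝ}
    (hbasis : ∀ x : X, (𝓝 x).HasBasis (fun ε => 0 < ε) fun ε => {y | D x y < ε})
    (hself : ∀ x, D x x = 0) (x y : X) : D x y = 0 ↔ x = y := by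
  refine ⟨fun h => ?_, fun h => h ▸ hself x⟩
  have hy : pure y ≤ 𝓝 x := (hbasis x).ge_iff.2 fun ε hε => by simpa [h] using hε
  exact (specializes_iff_pure.2 hy).eq.symm

/-- A right-invariant compatible metric on a dense subgroup `G` of a topological group
`H` extends uniquely to a continuous map `D : H × H → ℝ`, which is a right-invariant
compatible metric on `H`. -/
theorem stmt7 {H : Type*} [Group H] [TopologicalSpace H] [IsTopologicalGroup H] [T2Space H]
    (G : Subgroup H) (hG : Dense (G : Set H)) (d : H → H → ℝ)
    (hsymm : ∀ x ∈ G, ∀ y ∈ G, d x y = d y x)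
    (hpos : ∀ x ∈ G, ∀ y ∈ G, 0 ≤ d x y)
    (heq : ∀ x ∈ G, ∀ y ∈ G, (d x y = 0 ↔ x = y))
    (htri : ∀ x ∈ G, ∀ y ∈ G, ∀ z ∈ G, d x z ≤ d x y + d y z)
    (hinv : ∀ x ∈ G, ∀ y ∈ G, ∀ g ∈ G, d (x * g) (y * g) = d x y)
    (hcompat : ∀ x ∈ (G : Set H), nhdsWithin x (G : Set H)
      = ⨅ ε ∈ Set.Ioi (0 : ℝ), Filter.principal {y ∈ (G : Set H) | d x y < ε}) :
    ∃ D : H → H → ℝ,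
      Continuous (fun p : H × H => D p.1 p.2) ∧
      (∀ x ∈ G, ∀ y ∈ G, D x y = d x y) ∧
      (∀ D' : H → H → ℝ, Continuous (fun p : H × H => D' p.1 p.2) →
        (∀ x ∈ G, ∀ y ∈ G, D' x y = d x y) → D' = D) ∧
      (∀ x y, D x y = D y x) ∧ (∀ x y, 0 ≤ D x y) ∧
      (∀ x y, D x y = 0 ↔ x = y) ∧ (∀ x y z, D x z ≤ D x y + D y z) ∧
      (∀ x y g : H, D (x * g) (y * g) = D x y) ∧
      (∀ x : H, 𝓝 x = ⨅ ε ∈ Set.Ioi (0 : ℝ), Filter.principal {y | D x y < ε}) := by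
  have hbasis1 : (𝓝[(G : Set H)] 1).HasBasis (fun ε => 0 < ε)
      fun ε => {y ∈ (G : Set H) | d 1 y < ε} :=
    hcompat 1 G.one_mem ▸ hasBasis_biInf_Ioi_principal
      fun _ _ hεδ _ ⟨hyG, hy⟩ => ⟨hyG, hy.trans_le hεδ⟩
  obtain ⟨D, hD, hDd⟩ := G.exists_continuous_extension hG hsymm htri hinv
    fun _ hε => hbasis1.mem_of_mem hε
  have hself := G.extension_self hG hD hDd fun x hx => (heq x hx x hx).2 rfl
  have hDinv := G.extension_mul_right hG hD hDd hinv
  have hbasis := hasBasis_nhds_of_hasBasis_nhds_one hDinv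
    (G.hasBasis_nhds_one_extension hG hD hDd hbasis1 (hself 1))
  exact ⟨D, hD, hDd, fun D' hD' hD'd => G.eq_of_continuous_of_eqOn hG hD hDd hD' hD'd,
    G.extension_symm hG hD hDd hsymm, G.extension_nonneg hG hD hDd hpos,
    eq_iff_of_hasBasis_nhds hbasis hself, G.extension_triangle hG hD hDd htri, hDinv,
    fun x => (hbasis x).eq_biInf⟩
end

section
/- Let G be a topological group and let (μ_i)_{i∈I} be a net of Borel probability measures on G that UEB-converges to invariance. For each i, let C_i be a Borel subset of G with μ_i(C_i) = 1. Then the union over i of the sets C_i · C_i⁻¹ is dense in G. -/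
open Filter Topology MeasureTheory Pointwise

/-- A net `(μ i)` of Borel probability measures on a topological group `G`
UEB-converges to invariance if, for every `g ∈ G` and every norm-bounded,
right-uniformly equicontinuous family `H` of bounded right-uniformly continuous
real-valued functions on `G`, `sup_{f ∈ H} |∫ f ∘ λ_g dμ_i − ∫ f dμ_i| → 0`. -/
def UEBConvergesToInvariance {G ι : Type*} [Group G] [TopologicalSpace G]
    [MeasurableSpace G] (l : Filter ι) (μ : ι → Measure G) : Prop :=
  ∀ (g : G) (H : Set (G → ℝ)),
    (∃ C : ℝ, ∀ f ∈ H, ∀ x, |f x| ≤ C) →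
    (∀ ε > 0, ∃ U ∈ 𝓝 (1 : G), ∀ f ∈ H, ∀ x y : G, y * x⁻¹ ∈ U → |f x - f y| ≤ ε) →
    ∀ ε > 0, ∀ᶠ i in l, ∀ f ∈ H,
      |∫ x, f (g * x) ∂(μ i) - ∫ x, f x ∂(μ i)| ≤ ε

/-!
Suppose a neighbourhood `V` of `g` misses every `C i * (C i)⁻¹`. Take a right-uniformly
continuous bump `φ` with `φ g = 1` supported in `V`, and put
`F_D x = ⨆ c ∈ D, φ (x * c⁻¹)` (`supRightTranslates φ D`). The functions `F_D`, over all sets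
`D`, form a bounded right-uniformly equicontinuous family. On `C i` the function `F_{C i}`
vanishes (as `x * c⁻¹ ∉ V`) while `F_{C i} (g * ·)` equals `1` (take `c = x`), so
`∫ F_{C i} (g * x) dμ_i - ∫ F_{C i} dμ_i = 1` for every `i`, contradicting UEB-convergence to
invariance.
-/

open Set Uniformity SetRel UniformSpace

theorem abs_ciSup_sub_ciSup_le {ι : Type*} {a b : ι → ℝ} (ha : BddAbove (range a))
    (hb : BddAbove (range b)) {ε : ℝ} (hε : 0 ≤ ε) (hab : ∀ i, |a i - b i| ≤ ε) :
    |(⨆ i, a i) - ⨆ i, b i| ≤ ε := by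
  rcases isEmpty_or_nonempty ι with hι | hι
  · simpa [Real.iSup_of_isEmpty] using hε
  refine abs_sub_le_iff.2 ⟨sub_le_iff_le_add.2 (ciSup_le fun i => ?_),
    sub_le_iff_le_add.2 (ciSup_le fun i => ?_)⟩
  · linarith [(abs_sub_le_iff.1 (hab i)).1, le_ciSup hb i]
  · linarith [(abs_sub_le_iff.1 (hab i)).2, le_ciSup ha i]

theorem UniformEquicontinuous.iSup_subtype {X ι : Type*} [UniformSpace X] {F : ι → X → ℝ}
    (hF : UniformEquicontinuous F) (hbdd : ∀ x, BddAbove (range fun i => F i x)) :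
    UniformEquicontinuous fun (D : Set ι) x => ⨆ i : D, F i x := by
  have bdd (D : Set ι) (x : X) : BddAbove (range fun i : D => F i x) :=
    (hbdd x).mono (range_subset_iff.2 fun i => mem_range_self (i : ι))
  rw [Metric.uniformity_basis_dist_le.uniformEquicontinuous_iff_right] at hF ⊢
  intro ε hε
  filter_upwards [hF ε hε] with xy hxy D
  exact abs_ciSup_sub_ciSup_le (bdd D xy.1) (bdd D xy.2) hε.le fun i => hxy i

theorem UniformSpace.exists_le_isCountablyGenerated {X : Type*} [u : UniformSpace X]
    {s : SetRel X X} (hs : s ∈ 𝓤 X) :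
    ∃ v : UniformSpace X, 𝓤[u] ≤ 𝓤[v] ∧ (𝓤[v]).IsCountablyGenerated ∧ s ∈ 𝓤[v] := by
  choose! half half_mem half_symm half_comp using fun t (ht : t ∈ 𝓤 X) =>
    comp_symm_mem_uniformity_sets ht
  set V : ℕ → SetRel X X := fun n => half^[n] s
  have V_succ (n) : V (n + 1) = half (V n) := Function.iterate_succ_apply' half n s
  have V_mem (n) : V n ∈ 𝓤 X := by
    induction n with
    | zero => exact hs
    | succ n ih => rw [V_succ]; exact half_mem _ ih
  have V_comp (n) : V (n + 1) ○ V (n + 1) ⊆ V n := V_succ n ▸ half_comp _ (V_mem n)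
  have V_symm (n) : (V (n + 1)).IsSymm := V_succ n ▸ half_symm _ (V_mem n)
  have V_succ_subset (n) : V (n + 1) ⊆ V n :=
    have := isRefl_of_mem_uniformity (V_mem (n + 1)); left_subset_comp.trans (V_comp n)
  have hV : (⨅ n, 𝓟 (V n)).HasBasis (fun _ => True) V :=
    hasBasis_iInf_principal (antitone_nat_of_succ_le V_succ_subset).directed_ge
  let v : UniformSpace X := .ofCore <| .mk' (⨅ n, 𝓟 (V n))
    (fun r hr x => by
      obtain ⟨n, -, hn⟩ := hV.mem_iff.1 hr
      exact hn (refl_mem_uniformity (V_mem n)))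
    (fun r hr => by
      obtain ⟨n, -, hn⟩ := hV.mem_iff.1 hr
      exact hV.mem_iff.2
        ⟨n + 1, trivial, fun p hp => hn (V_succ_subset n ((V_symm n).symm _ _ hp))⟩)
    (fun r hr => by
      obtain ⟨n, -, hn⟩ := hV.mem_iff.1 hr
      exact ⟨V (n + 1), hV.mem_of_mem trivial, (V_comp n).trans hn⟩)
  exact ⟨v, le_iInf fun n => le_principal_iff.2 (V_mem n), isCountablyGenerated_seq V,
    hV.mem_of_mem (i := 0) trivial⟩

/- The coarser uniformity is pseudometrizable, and the bump is a truncated distance to `x`. -/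
theorem UniformSpace.exists_uniformContinuous_bump {X : Type*} [UniformSpace X] (x : X)
    {s : SetRel X X} (hs : s ∈ 𝓤 X) :
    ∃ f : X → ℝ, UniformContinuous f ∧ f x = 1 ∧ (∀ y, f y ∈ Icc 0 1) ∧
      ∀ y ∉ ball x s, f y = 0 := by
  obtain ⟨v, huv, hv, hsv⟩ := exists_le_isCountablyGenerated hs
  let _ : PseudoMetricSpace X := @UniformSpace.pseudoMetricSpace X v hv
  obtain ⟨δ, hδ, hδs⟩ := Metric.uniformity_basis_dist.mem_iff.1 hsv
  refine ⟨fun y => max 0 (1 - dist x y / δ), ?_, by simp, fun y => ⟨le_max_left _ _,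
    max_le zero_le_one (sub_le_self _ (div_nonneg dist_nonneg hδ.le))⟩,
    fun y hy => max_eq_left (sub_nonpos.2 ((one_le_div hδ).2 (not_lt.1 fun h => hy (hδs h))))⟩
  have hd : UniformContinuous fun y => 1 - dist x y / δ :=
    uniformContinuous_const.sub ((uniformContinuous_const.dist uniformContinuous_id).div_const' δ)
  exact (lipschitzWith_max.uniformContinuous.comp (uniformContinuous_const.prodMk hd)).mono_left huv

section Translates

variable {G : Type*} [Group G]

noncomputable def supRightTranslates (φ : G → ℝ) (D : Set G) (x : G) : ℝ :=
  ⨆ c : D, φ (x * (c : G)⁻¹)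

theorem abs_supRightTranslates_le {φ : G → ℝ} (hφ : ∀ y, φ y ∈ Icc 0 1) (D : Set G) (x : G) :
    |supRightTranslates φ D x| ≤ 1 :=
  abs_le.2 ⟨(neg_one_lt_zero.trans_le (Real.iSup_nonneg fun (_ : D) => (hφ _).1)).le,
    Real.iSup_le (fun _ => (hφ _).2) zero_le_one⟩

theorem supRightTranslates_eq_zero {φ : G → ℝ} {V D : Set G} (hφV : ∀ y ∉ V, φ y = 0)
    (hDV : Disjoint (D * D⁻¹) V) {x : G} (hx : x ∈ D) : supRightTranslates φ D x = 0 := by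
  have (c : D) : φ (x * (c : G)⁻¹) = 0 :=
    hφV _ (hDV.notMem_of_mem_left (mul_mem_mul hx (inv_mem_inv.2 c.2)))
  simp only [supRightTranslates, this, Real.iSup_const_zero]

theorem supRightTranslates_mul_eq_one {φ : G → ℝ} (hφ : ∀ y, φ y ≤ 1) {g : G} (hg : φ g = 1)
    {D : Set G} {x : G} (hx : x ∈ D) : supRightTranslates φ D (g * x) = 1 :=
  le_antisymm (Real.iSup_le (fun _ => hφ _) zero_le_one)
    (le_ciSup_of_le ⟨1, forall_mem_range.2 fun _ => hφ _⟩ ⟨x, hx⟩ (by simp [hg]))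

end Translates

attribute [local instance] IsTopologicalGroup.rightUniformSpace

section RightUniformity

variable {G : Type*} [Group G] [TopologicalSpace G] [IsTopologicalGroup G]

theorem UniformContinuous.uniformEquicontinuous_mul_inv_right {φ : G → ℝ}
    (hφ : UniformContinuous φ) : UniformEquicontinuous fun (c : G) x => φ (x * c⁻¹) := by
  intro U hU
  obtain ⟨W, hW, hWU⟩ := mem_comap.1 (hφ hU)
  refine mem_comap.2 ⟨W, hW, fun xy hxy c => @hWU (xy.1 * c⁻¹, xy.2 * c⁻¹) ?_⟩
  simpa [mul_assoc] using hxy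

theorem UniformEquicontinuous.exists_mem_nhds_one {ι : Type*} {F : ι → G → ℝ}
    (hF : UniformEquicontinuous F) {ε : ℝ} (hε : 0 < ε) :
    ∃ U ∈ 𝓝 (1 : G), ∀ i x y, y * x⁻¹ ∈ U → |F i x - F i y| ≤ ε := by
  rw [Metric.uniformity_basis_dist_le.uniformEquicontinuous_iff_right] at hF
  obtain ⟨W, hW, hWsub⟩ := mem_comap.1 (hF ε hε)
  exact ⟨W, hW, fun i x y h => hWsub (show (x, y).2 * (x, y).1⁻¹ ∈ W from h) i⟩

theorem uniformEquicontinuous_supRightTranslates {φ : G → ℝ} (hφ : UniformContinuous φ)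
    (hbdd : BddAbove (range φ)) : UniformEquicontinuous (supRightTranslates φ) :=
  hφ.uniformEquicontinuous_mul_inv_right.iSup_subtype fun _ =>
    hbdd.mono (range_subset_iff.2 fun _ => mem_range_self _)

end RightUniformity

theorem stmt8_general {G ι : Type*} [Group G] [TopologicalSpace G] [IsTopologicalGroup G]
    [MeasurableSpace G] (l : Filter ι) [l.NeBot]
    (μ : ι → Measure G) (hprob : ∀ i, IsProbabilityMeasure (μ i))
    (hUEB : UEBConvergesToInvariance l μ)
    (C : ι → Set G) (hmeas : ∀ i, MeasurableSet (C i)) (hC : ∀ i, μ i (C i) = 1) :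
    Dense (⋃ i, C i * (C i)⁻¹) := by
  refine fun g => mem_closure_iff_nhds.2 fun V hV => not_not.1 fun hVC => ?_
  have hdisj (i : ι) : Disjoint (C i * (C i)⁻¹) V :=
    ((disjoint_iff_inter_eq_empty.2 (not_nonempty_iff_eq_empty.1 hVC)).mono_right
      (subset_iUnion (fun i => C i * (C i)⁻¹) i)).symm
  obtain ⟨s, hs, hsV⟩ := UniformSpace.mem_nhds_iff.1 hV
  obtain ⟨φ, hφ, hφg, hφ01, hφs⟩ := exists_uniformContinuous_bump g hs
  have hφV : ∀ y ∉ V, φ y = 0 := fun y hy => hφs y fun h => hy (hsV h)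
  set F := supRightTranslates φ
  have hF := uniformEquicontinuous_supRightTranslates hφ
    ⟨1, forall_mem_range.2 fun y => (hφ01 y).2⟩
  obtain ⟨i, hi⟩ := (hUEB g (range F) ⟨1, forall_mem_range.2 (abs_supRightTranslates_le hφ01)⟩
    (fun ε hε => by simpa only [forall_mem_range] using hF.exists_mem_nhds_one hε)
    (1 / 2) one_half_pos).exists
  have : IsProbabilityMeasure (μ i) := hprob i
  have hCi : ∀ᵐ x ∂μ i, x ∈ C i := mem_ae_iff.2 ((prob_compl_eq_zero_iff (hmeas i)).2 (hC i))
  have integral_F : ∫ x, F (C i) x ∂μ i = 0 := by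
    rw [integral_congr_ae (hCi.mono fun x hx => supRightTranslates_eq_zero hφV (hdisj i) hx)]
    exact integral_zero _ _
  have integral_F_translate : ∫ x, F (C i) (g * x) ∂μ i = 1 := by
    rw [integral_congr_ae (hCi.mono fun x hx =>
      supRightTranslates_mul_eq_one (fun y => (hφ01 y).2) hφg hx)]
    simp
  have := hi _ (mem_range_self (C i))
  rw [integral_F, integral_F_translate] at this
  norm_num at this

/-- If `(μ i)` UEB-converges to invariance over `G` and `C i` are Borel sets of full
measure, then `⋃ i, C i · (C i)⁻¹` is dense in `G`. -/
theorem stmt8 {G ι : Type*} [Group G] [TopologicalSpace G] [IsTopologicalGroup G]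
    [MeasurableSpace G] [BorelSpace G] (l : Filter ι) [l.NeBot]
    (μ : ι → Measure G) (hprob : ∀ i, IsProbabilityMeasure (μ i))
    (hUEB : UEBConvergesToInvariance l μ)
    (C : ι → Set G) (hmeas : ∀ i, MeasurableSet (C i)) (hC : ∀ i, μ i (C i) = 1) :
    Dense (⋃ i, C i * (C i)⁻¹) :=
  stmt8_general l μ hprob hUEB C hmeas hC
end

section
/- Let G be a metrizable topological group admitting a sequence (μ_n) of Borel probability measures that UEB-converges to invariance, such that for each n there is a compact set C_n ⊆ G with μ_n(C_n) = 1. Then G is separable. -/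
open Filter Topology MeasureTheory Pointwise

/-! Pick a countable `c` dense in `⋃ n, C n` and let `Γ` be the closure of the subgroup it
generates, so that every `μ n` is carried by `Γ`. If some `g` lay outside the closed subgroup `Γ`,
there would be a bounded right-uniformly continuous `f` vanishing on `Γ` and equal to `1` on `g Γ`;
then `∫ f (g x) dμ n - ∫ f dμ n = 1` for every `n`, contradicting UEB-convergence to invariance.
Hence the countable subgroup generated by `c` is dense. -/

open scoped Uniformity

theorem Set.Countable.subgroupClosure {G : Type*} [Group G] {s : Set G} (hs : s.Countable) :
    (Subgroup.closure s : Set G).Countable := by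
  have := hs.to_subtype
  rw [FreeGroup.closure_eq_range, MonoidHom.coe_range]
  exact Set.countable_range _

theorem exists_uniformContinuous_eqOn_zero_one {X : Type*} [UniformSpace X]
    [(𝓤 X).IsCountablyGenerated] {A B : Set X} (hA : A.Nonempty) {V : Set (X × X)}
    (hV : V ∈ 𝓤 X) (hAB : ∀ a ∈ A, ∀ b ∈ B, (a, b) ∉ V) :
    ∃ f : X → ℝ, UniformContinuous f ∧ (∀ x, |f x| ≤ 1) ∧ Set.EqOn f 0 A ∧ Set.EqOn f 1 B := by
  let := UniformSpace.pseudoMetricSpace X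
  obtain ⟨δ, hδ, hδV⟩ := Metric.mem_uniformity_dist.1 hV
  refine ⟨fun x => min (Metric.infDist x A) δ / δ, ?_, fun x => ?_, fun x hx => ?_, fun x hx => ?_⟩
  · exact ((Metric.lipschitz_infDist_pt A).min_const δ).uniformContinuous.div_const' δ
  · have := Metric.infDist_nonneg (x := x) (s := A)
    rw [abs_of_nonneg (by positivity), div_le_one hδ]
    exact min_le_right _ _
  · simp [Metric.infDist_zero_of_mem hx, hδ.le]
  · have : δ ≤ Metric.infDist x A := (Metric.le_infDist hA).2 fun a ha =>
      not_lt.1 fun h => hAB a ha x hx (hδV (dist_comm x a ▸ h))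
    simp [min_eq_right this, hδ.ne']

section RightUniformity

variable {G : Type*} [Group G] [TopologicalSpace G] [IsTopologicalGroup G]

-- The right uniformity, with entourages `{(x, y) | y * x⁻¹ ∈ U}`, is the one that the
-- equicontinuity condition in `UEBConvergesToInvariance` refers to.
attribute [local instance] IsTopologicalGroup.rightUniformSpace

theorem Subgroup.exists_uniformContinuous_separating_coset [FirstCountableTopology G]
    {Γ : Subgroup G} (hΓ : IsClosed (Γ : Set G)) {g : G} (hg : g ∉ Γ) :
    ∃ f : G → ℝ, UniformContinuous f ∧ (∀ x, |f x| ≤ 1) ∧ (∀ x ∈ Γ, f x = 0) ∧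
      ∀ x ∈ Γ, f (g * x) = 1 := by
  have : (𝓤 G).IsCountablyGenerated := Filter.comap.isCountablyGenerated _ _
  have hV : (fun p : G × G => p.2 * p.1⁻¹) ⁻¹' (g • (Γ : Set G))ᶜ ∈ 𝓤 G := by
    refine preimage_mem_comap ((hΓ.smul g).isOpen_compl.mem_nhds ?_)
    rintro ⟨x, hx, hgx⟩
    exact hg (eq_inv_of_mul_eq_one_left hgx ▸ Γ.inv_mem hx)
  have hcoset : ∀ a ∈ Γ, ∀ b ∈ g • (Γ : Set G), b * a⁻¹ ∈ g • (Γ : Set G) := by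
    rintro a ha _ ⟨x, hx, rfl⟩
    exact ⟨x * a⁻¹, Γ.mul_mem hx (Γ.inv_mem ha), by simp [mul_assoc]⟩
  obtain ⟨f, hfu, hfb, hf0, hf1⟩ := exists_uniformContinuous_eqOn_zero_one ⟨1, Γ.one_mem⟩ hV
    fun a ha b hb hab => hab (hcoset a ha b hb)
  exact ⟨f, hfu, hfb, hf0, fun x hx => hf1 (Set.smul_mem_smul_set hx)⟩

theorem UEBConvergesToInvariance.tendsto_integral_mul_sub {ι : Type*} [MeasurableSpace G]
    {l : Filter ι} {μ : ι → Measure G} (hμ : UEBConvergesToInvariance l μ) {f : G → ℝ}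
    (hf : UniformContinuous f) (hfb : ∃ C, ∀ x, |f x| ≤ C) (g : G) :
    Tendsto (fun i => ∫ x, f (g * x) ∂μ i - ∫ x, f x ∂μ i) l (𝓝 0) := by
  have hequi : ∀ ε > 0, ∃ U ∈ 𝓝 (1 : G), ∀ f' ∈ ({f} : Set (G → ℝ)), ∀ x y : G,
      y * x⁻¹ ∈ U → |f' x - f' y| ≤ ε := by
    intro ε hε
    obtain ⟨U, hU, hUf⟩ := mem_comap.1 (hf (Metric.dist_mem_uniformity hε))
    refine ⟨U, hU, ?_⟩
    rintro _ rfl x y hxy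
    simpa only [Set.mem_preimage, Set.mem_ofPred_eq, Real.dist_eq] using (hUf (a := (x, y)) hxy).le
  refine Metric.tendsto_nhds.2 fun ε hε => ?_
  filter_upwards [hμ g {f} (by simpa using hfb) hequi (ε / 2) (half_pos hε)] with i hi
  simpa using (hi f rfl).trans_lt (half_lt_self hε)

theorem UEBConvergesToInvariance.eq_top_of_ae_mem [FirstCountableTopology G] [MeasurableSpace G]
    {ι : Type*} {l : Filter ι} [l.NeBot] {μ : ι → Measure G} [∀ i, IsProbabilityMeasure (μ i)]
    (hμ : UEBConvergesToInvariance l μ) {Γ : Subgroup G} (hΓ : IsClosed (Γ : Set G))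
    (hae : ∀ᶠ i in l, ∀ᵐ x ∂μ i, x ∈ Γ) : Γ = ⊤ := by
  refine (Subgroup.eq_top_iff' Γ).2 fun g => by_contra fun hg => ?_
  obtain ⟨f, hfu, hfb, hf0, hf1⟩ := Subgroup.exists_uniformContinuous_separating_coset hΓ hg
  have hone : ∀ᶠ i in l, ∫ x, f (g * x) ∂μ i - ∫ x, f x ∂μ i = 1 := by
    filter_upwards [hae] with i hi
    rw [integral_congr_ae (hi.mono hf1), integral_congr_ae (hi.mono hf0)]
    simp
  exact one_ne_zero <| tendsto_nhds_unique (tendsto_const_nhds.congr' (hone.mono fun _ => Eq.symm))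
    (hμ.tendsto_integral_mul_sub hfu ⟨1, hfb⟩ g)

end RightUniformity

/-- A metrizable topological group admitting a sequence of Borel probability measures
UEB-converging to invariance, each giving full measure to some compact set, is
separable. -/
theorem stmt9 {G : Type*} [Group G] [TopologicalSpace G] [IsTopologicalGroup G]
    [TopologicalSpace.MetrizableSpace G] [MeasurableSpace G] [BorelSpace G]
    (μ : ℕ → Measure G) (hprob : ∀ n, IsProbabilityMeasure (μ n))
    (hUEB : UEBConvergesToInvariance atTop μ)
    (C : ℕ → Set G) (hcpt : ∀ n, IsCompact (C n)) (hC : ∀ n, μ n (C n) = 1) :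
    TopologicalSpace.SeparableSpace G := by
  obtain ⟨c, hc, hCc⟩ := TopologicalSpace.IsSeparable.iUnion fun n => (hcpt n).isSeparable
  set Γ := (Subgroup.closure c).topologicalClosure
  have hCΓ : ∀ n, C n ⊆ Γ := fun n =>
    (Set.subset_iUnion C n).trans (hCc.trans (closure_mono Subgroup.subset_closure))
  have hae : ∀ n, ∀ᵐ x ∂μ n, x ∈ Γ := fun n =>
    (ae_mem_iff_measure_eq (hcpt n).isClosed.nullMeasurableSet).2 (by simp [hC n]) |>.mono (hCΓ n)
  have hΓ : Γ = ⊤ := hUEB.eq_top_of_ae_mem (Subgroup.isClosed_topologicalClosure _)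
    (Eventually.of_forall hae)
  refine ⟨⟨_, hc.subgroupClosure, dense_iff_closure_eq.2 ?_⟩⟩
  rw [← Subgroup.topologicalClosure_coe]
  exact congrArg SetLike.coe hΓ
end

section
/- Let G be a topological group, let (μ_i)_{i∈I} be a net of Borel probability measures on G UEB-converging to invariance, and let (g_i)_{i∈I} be any family of elements of G. Then the net of push-forward measures ((ρ_{g_i})_*(μ_i))_{i∈I}, where ρ_g(x) = x·g, also UEB-converges to invariance over G. -/
/-! Left and right translations commute, so `∫ f(g₀ x) − ∫ f` against `(ρ_{g_i})_* μ_i` is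
`∫ φ(g₀ x) − ∫ φ` against `μ_i` for the right translate `φ = f(· g_i)`. Right translates of a
bounded right-uniformly equicontinuous family form another such family, since
`(y h)(x h)⁻¹ = y x⁻¹`; the hypothesis applied to that larger family gives the uniformity in `i`. -/

open Filter Topology MeasureTheory Pointwise

section RightTranslates

variable {G : Type*} [Group G]

def rightTranslates (H : Set (G → ℝ)) : Set (G → ℝ) :=
  {φ | ∃ f ∈ H, ∃ h : G, φ = fun x => f (x * h)}

theorem rightTranslates_bounded {H : Set (G → ℝ)} (hH : ∃ C : ℝ, ∀ f ∈ H, ∀ x, |f x| ≤ C) :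
    ∃ C : ℝ, ∀ φ ∈ rightTranslates H, ∀ x, |φ x| ≤ C := by
  obtain ⟨C, hC⟩ := hH
  refine ⟨C, ?_⟩
  rintro _ ⟨f, hf, h, rfl⟩ x
  exact hC f hf (x * h)

theorem rightTranslates_rightUniformlyEquicontinuous [TopologicalSpace G] {H : Set (G → ℝ)}
    (hH : ∀ ε > 0, ∃ U ∈ 𝓝 (1 : G), ∀ f ∈ H, ∀ x y : G, y * x⁻¹ ∈ U → |f x - f y| ≤ ε) :
    ∀ ε > 0, ∃ U ∈ 𝓝 (1 : G), ∀ φ ∈ rightTranslates H, ∀ x y : G,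
      y * x⁻¹ ∈ U → |φ x - φ y| ≤ ε := by
  intro ε hε
  obtain ⟨U, hU, hUH⟩ := hH ε hε
  refine ⟨U, hU, ?_⟩
  rintro _ ⟨f, hf, h, rfl⟩ x y hxy
  refine hUH f hf (x * h) (y * h) ?_
  simpa only [mul_inv_rev, mul_assoc, mul_inv_cancel_left] using hxy

end RightTranslates

theorem integral_map_mul_right {G E : Type*} [Group G] [MeasurableSpace G] [MeasurableMul G]
    [NormedAddCommGroup E] [NormedSpace ℝ E] (μ : Measure G) (g : G) (f : G → E) :
    ∫ x, f x ∂μ.map (· * g) = ∫ x, f (x * g) ∂μ :=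
  (MeasurableEquiv.mulRight g).measurableEmbedding.integral_map f

theorem stmt10_general {G ι : Type*} [Group G] [TopologicalSpace G] [IsTopologicalGroup G]
    [MeasurableSpace G] [BorelSpace G] (l : Filter ι)
    (μ : ι → Measure G)
    (hUEB : UEBConvergesToInvariance l μ) (g : ι → G) :
    UEBConvergesToInvariance l (fun i => (μ i).map (fun x => x * g i)) := by
  intro g₀ H hbdd hequi ε hε
  filter_upwards [hUEB g₀ (rightTranslates H) (rightTranslates_bounded hbdd)
    (rightTranslates_rightUniformlyEquicontinuous hequi) ε hε] with i hi f hf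
  simpa only [integral_map_mul_right, mul_assoc] using hi _ ⟨f, hf, g i, rfl⟩

/-- If `(μ i)` UEB-converges to invariance over `G` and `(g i)` is any family in `G`,
then the right-translated net `((ρ_{g_i})_*(μ_i))` also UEB-converges to invariance. -/
theorem stmt10 {G ι : Type*} [Group G] [TopologicalSpace G] [IsTopologicalGroup G]
    [MeasurableSpace G] [BorelSpace G] (l : Filter ι)
    (μ : ι → Measure G) (hprob : ∀ i, IsProbabilityMeasure (μ i))
    (hUEB : UEBConvergesToInvariance l μ) (g : ι → G) :
    UEBConvergesToInvariance l (fun i => (μ i).map (fun x => x * g i)) :=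
  stmt10_general l μ hUEB g
end

section
/- Let φ : G → H be a continuous homomorphism with dense range between topological groups, and let (μ_i)_{i∈I} be a net of Borel probability measures on G UEB-converging to invariance over G. Then the push-forward net (φ_*(μ_i))_{i∈I} UEB-converges to invariance over H. -/
/-!
Pull a UEB family `F` on `H` back along `φ`: since `φ` is a continuous homomorphism, `F ∘ φ` is
again a UEB family, so `∫ f(φ g · φ x) dμᵢ − ∫ f(φ x) dμᵢ` is eventually small uniformly in
`f ∈ F`. To translate by an arbitrary `h ∈ H`, use density to pick `g` with `φ g · h⁻¹` in the
neighbourhood of `1` given by equicontinuity of `F`; then `f(h · y)` and `f(φ g · y)` are uniformly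
close, and so are their integrals against every probability measure.
-/

open Filter Topology MeasureTheory Pointwise

section Equicontinuity

variable {G H : Type*} [Group G] [TopologicalSpace G] [Group H] [TopologicalSpace H]

def RightUniformlyEquicontinuous (F : Set (H → ℝ)) : Prop :=
  ∀ ε > 0, ∃ U ∈ 𝓝 (1 : H), ∀ f ∈ F, ∀ x y : H, y * x⁻¹ ∈ U → |f x - f y| ≤ ε

theorem RightUniformlyEquicontinuous.continuous [ContinuousMul H] {F : Set (H → ℝ)}
    (hF : RightUniformlyEquicontinuous F) {f : H → ℝ} (hf : f ∈ F) : Continuous f := by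
  refine continuous_iff_continuousAt.2 fun x₀ => Metric.tendsto_nhds.2 fun ε hε => ?_
  obtain ⟨U, hU, hUF⟩ := hF (ε / 2) (half_pos hε)
  have hnhds : {y : H | y * x₀⁻¹ ∈ U} ∈ 𝓝 x₀ :=
    (continuous_mul_const x₀⁻¹).continuousAt.preimage_mem_nhds (by simpa using hU)
  filter_upwards [hnhds] with y hy
  rw [Real.dist_eq, abs_sub_comm]
  exact (hUF f hf x₀ y hy).trans_lt (half_lt_self hε)

theorem RightUniformlyEquicontinuous.comp_monoidHom {F : Set (H → ℝ)}
    (hF : RightUniformlyEquicontinuous F) {φ : G →* H} (hφ : Continuous φ) :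
    RightUniformlyEquicontinuous ((· ∘ φ) '' F) := by
  intro ε hε
  obtain ⟨U, hU, hUF⟩ := hF ε hε
  refine ⟨φ ⁻¹' U, hφ.continuousAt.preimage_mem_nhds (by simpa using hU), ?_⟩
  rintro _ ⟨f, hf, rfl⟩ x y hxy
  exact hUF f hf (φ x) (φ y) (by simpa using hxy)

end Equicontinuity

theorem DenseRange.exists_mul_inv_mem {G H : Type*} [Group H] [TopologicalSpace H]
    [ContinuousMul H] {φ : G → H} (hφ : DenseRange φ) {U : Set H} (hU : U ∈ 𝓝 1) (h : H) :
    ∃ g, φ g * h⁻¹ ∈ U :=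
  hφ.mem_nhds (x := h) ((continuous_mul_const h⁻¹).continuousAt.preimage_mem_nhds (by simpa using hU))

theorem abs_integral_sub_integral_le_of_abs_sub_le {X : Type*} [MeasurableSpace X]
    {ν : Measure X} [IsProbabilityMeasure ν] {u v : X → ℝ} (hu : Integrable u ν)
    (hv : Integrable v ν) {ε : ℝ} (huv : ∀ x, |u x - v x| ≤ ε) :
    |∫ x, u x ∂ν - ∫ x, v x ∂ν| ≤ ε := by
  rw [← integral_sub hu hv]
  simpa using norm_integral_le_of_norm_le_const (μ := ν) (Eventually.of_forall fun x => (Real.norm_eq_abs _).trans_le (huv x))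

theorem Continuous.integrable_of_abs_le {X : Type*} [TopologicalSpace X] [MeasurableSpace X]
    [OpensMeasurableSpace X] {ν : Measure X} [IsFiniteMeasure ν] {f : X → ℝ}
    (hf : Continuous f) {C : ℝ} (hC : ∀ x, |f x| ≤ C) : Integrable f ν :=
  .of_bound hf.aestronglyMeasurable C (Eventually.of_forall hC)

theorem stmt11_general {G H ι : Type*} [Group G] [TopologicalSpace G]
    [MeasurableSpace G] [BorelSpace G]
    [Group H] [TopologicalSpace H] [IsTopologicalGroup H]
    [MeasurableSpace H] [BorelSpace H]
    (φ : G →* H) (hcont : Continuous φ) (hdense : DenseRange φ)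
    (l : Filter ι) (μ : ι → Measure G) (hprob : ∀ i, IsProbabilityMeasure (μ i))
    (hUEB : UEBConvergesToInvariance l μ) :
    UEBConvergesToInvariance l (fun i => (μ i).map φ) := by
  intro h F ⟨C, hC⟩ hF ε hε
  obtain ⟨U, hU, hUF⟩ := hF (ε / 2) (half_pos hε)
  obtain ⟨g, hg⟩ := hdense.exists_mul_inv_mem hU h
  have hpullback := hUEB g _ ⟨C, by rintro _ ⟨f, hf, rfl⟩ x; exact hC f hf (φ x)⟩
    (RightUniformlyEquicontinuous.comp_monoidHom hF hcont) (ε / 2) (half_pos hε)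
  filter_upwards [hpullback] with i hi f hf
  have hφ : AEMeasurable φ (μ i) := hcont.measurable.aemeasurable
  have := hprob i
  have := Measure.isProbabilityMeasure_map hφ
  have hfc : Continuous f := RightUniformlyEquicontinuous.continuous hF hf
  have hintegrable (k : H) : Integrable (fun y => f (k * y)) ((μ i).map φ) :=
    (hfc.comp (continuous_const_mul k)).integrable_of_abs_le fun y => hC f hf _
  have hclose : ∀ y, |f (h * y) - f (φ g * y)| ≤ ε / 2 := fun y =>
    hUF f hf _ _ (by rwa [mul_inv_rev, mul_assoc, mul_inv_cancel_left])
  have htranslate : ∫ y, f (φ g * y) ∂(μ i).map φ - ∫ y, f y ∂(μ i).map φ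
      = ∫ x, (f ∘ φ) (g * x) ∂μ i - ∫ x, (f ∘ φ) x ∂μ i := by
    rw [integral_map hφ (hintegrable (φ g)).1, integral_map hφ hfc.aestronglyMeasurable]
    simp only [Function.comp_apply, map_mul]
  calc _ ≤ |∫ y, f (h * y) ∂(μ i).map φ - ∫ y, f (φ g * y) ∂(μ i).map φ|
        + |∫ y, f (φ g * y) ∂(μ i).map φ - ∫ y, f y ∂(μ i).map φ| := abs_sub_le _ _ _
    _ ≤ ε / 2 + ε / 2 := by
      refine add_le_add (abs_integral_sub_integral_le_of_abs_sub_le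
        (hintegrable h) (hintegrable (φ g)) hclose) ?_
      rw [htranslate]
      exact hi _ ⟨f, hf, rfl⟩
    _ = ε := add_halves ε

/-- Push-forwards of a net UEB-converging to invariance along a continuous homomorphism
with dense range UEB-converge to invariance over the codomain. -/
theorem stmt11 {G H ι : Type*} [Group G] [TopologicalSpace G] [IsTopologicalGroup G]
    [MeasurableSpace G] [BorelSpace G]
    [Group H] [TopologicalSpace H] [IsTopologicalGroup H]
    [MeasurableSpace H] [BorelSpace H]
    (φ : G →* H) (hcont : Continuous φ) (hdense : DenseRange φ)
    (l : Filter ι) (μ : ι → Measure G) (hprob : ∀ i, IsProbabilityMeasure (μ i))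
    (hUEB : UEBConvergesToInvariance l μ) :
    UEBConvergesToInvariance l (fun i => (μ i).map φ) :=
  stmt11_general φ hcont hdense l μ hprob hUEB
end

section
/- Let G be a topological group and d a right-invariant metric on G compatible with its topology. A net (μ_i)_{i∈I} of Borel probability measures on G UEB-converges to invariance over G if and only if for every g ∈ G, the mass transportation distance d_MT((λ_g)_*(μ_i), μ_i) converges to 0. -/
/-!
A UEB family is uniformly equicontinuous for the right-invariant metric `d`, so each of its
members `f` with `|f| ≤ C` is uniformly `ε`-close to its inf-convolution
`x ↦ ⨅ y, f y + K d(x, y)` with `K = 2C/δ`, where `δ` is a modulus of equicontinuity for `ε`.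
These inf-convolutions are `K`-Lipschitz and bounded by `C`, so after scaling by a constant
they are 1-Lipschitz and bounded by 1, and the mass transportation estimate controls them.
Conversely, the 1-Lipschitz functions bounded by 1 form a UEB family.
-/

open Filter Topology MeasureTheory Pointwise

structure IsPseudoMetric {X : Type*} (d : X → X → ℝ) : Prop where
  dist_self : ∀ x, d x x = 0
  symm : ∀ x y, d x y = d y x
  triangle : ∀ x y z, d x z ≤ d x y + d y z

namespace IsPseudoMetric

variable {X : Type*} {d : X → X → ℝ}

theorem nonneg (hd : IsPseudoMetric d) (x y : X) : 0 ≤ d x y := by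
  have := hd.triangle x y x
  rw [hd.dist_self, hd.symm y x] at this
  linarith

end IsPseudoMetric

section InfConvolution

variable {X : Type*} {d : X → X → ℝ} {f : X → ℝ} {K C : ℝ}

/-- The Pasch–Hausdorff envelope of `f`. -/
noncomputable def infConv (d : X → X → ℝ) (K : ℝ) (f : X → ℝ) (x : X) : ℝ :=
  ⨅ y, f y + K * d x y

variable (hd : IsPseudoMetric d) (hK : 0 ≤ K) (hf : ∀ x, |f x| ≤ C)
include hd hK hf

theorem neg_le_infConv_summand (x y : X) : -C ≤ f y + K * d x y := by
  have := (abs_le.1 (hf y)).1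
  nlinarith [mul_nonneg hK (hd.nonneg x y)]

theorem bddBelow_infConv_summand (x : X) : BddBelow (Set.range fun y => f y + K * d x y) :=
  ⟨-C, Set.forall_mem_range.2 (neg_le_infConv_summand hd hK hf x)⟩

theorem infConv_le_add (x y : X) : infConv d K f x ≤ f y + K * d x y :=
  ciInf_le (bddBelow_infConv_summand hd hK hf x) y

theorem infConv_le_self (x : X) : infConv d K f x ≤ f x := by
  simpa [hd.dist_self] using infConv_le_add hd hK hf x x

theorem abs_infConv_le (x : X) : |infConv d K f x| ≤ C := by
  have : Nonempty X := ⟨x⟩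
  exact abs_le.2 ⟨le_ciInf (neg_le_infConv_summand hd hK hf x),
    (infConv_le_self hd hK hf x).trans (abs_le.1 (hf x)).2⟩

theorem infConv_le_infConv_add (x z : X) : infConv d K f x ≤ infConv d K f z + K * d x z := by
  have : Nonempty X := ⟨x⟩
  suffices infConv d K f x - K * d x z ≤ infConv d K f z by linarith
  refine le_ciInf fun y => ?_
  have := infConv_le_add hd hK hf x y
  nlinarith [hd.triangle x z y]

theorem abs_infConv_sub_infConv_le (x z : X) :
    |infConv d K f x - infConv d K f z| ≤ K * d x z := by
  have h₁ := infConv_le_infConv_add hd hK hf x z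
  have h₂ := infConv_le_infConv_add hd hK hf z x
  rw [hd.symm z x] at h₂
  exact abs_le.2 ⟨by linarith, by linarith⟩

omit hK in
/-- Far from `x` the penalty `K d(x, y) ≥ 2C` dominates, near `x` the oscillation of `f` is
at most `η`; so the infimum is attained up to `η` close to `x`. -/
theorem abs_sub_infConv_le {δ η : ℝ} (hδ : 0 < δ)
    (hosc : ∀ x y, d x y < δ → |f x - f y| ≤ η) (x : X) :
    |f x - infConv d (2 * C / δ) f x| ≤ η := by
  have hC : 0 ≤ C := (abs_nonneg _).trans (hf x)
  have hK : 0 ≤ 2 * C / δ := by positivity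
  have hη : 0 ≤ η := (abs_nonneg _).trans (hosc x x (by simpa [hd.dist_self] using hδ))
  have : Nonempty X := ⟨x⟩
  have hlow : f x - η ≤ infConv d (2 * C / δ) f x := by
    refine le_ciInf fun y => ?_
    rcases lt_or_ge (d x y) δ with hxy | hxy
    · linarith [(abs_le.1 (hosc x y hxy)).2, mul_nonneg hK (hd.nonneg x y)]
    · have hpen : 2 * C ≤ 2 * C / δ * d x y := by
        rw [div_mul_eq_mul_div, le_div_iff₀ hδ]
        exact mul_le_mul_of_nonneg_left hxy (by positivity)
      linarith [(abs_le.1 (hf x)).2, (abs_le.1 (hf y)).1]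
  exact abs_le.2 ⟨by linarith [infConv_le_self hd hK hf x], by linarith⟩

end InfConvolution

section Equicontinuity

variable {X : Type*} (d : X → X → ℝ)

def IsUniformlyEquicontinuous (H : Set (X → ℝ)) : Prop :=
  ∀ ε > 0, ∃ δ > 0, ∀ f ∈ H, ∀ x y, d x y < δ → |f x - f y| ≤ ε

variable {d}

theorem IsUniformlyEquicontinuous.mono {H H' : Set (X → ℝ)} (h : IsUniformlyEquicontinuous d H)
    (hH : H' ⊆ H) : IsUniformlyEquicontinuous d H' := fun ε hε =>
  let ⟨δ, hδ, hδH⟩ := h ε hε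
  ⟨δ, hδ, fun f hf => hδH f (hH hf)⟩

theorem isUniformlyEquicontinuous_lipschitz {K : ℝ} (hK : 0 ≤ K) :
    IsUniformlyEquicontinuous d {f | ∀ x y, |f x - f y| ≤ K * d x y} := by
  intro ε hε
  refine ⟨ε / (K + 1), by positivity, fun f hf x y hxy => ?_⟩
  calc |f x - f y| ≤ K * d x y := hf x y
    _ ≤ K * (ε / (K + 1)) := mul_le_mul_of_nonneg_left hxy.le hK
    _ ≤ ε := by
      rw [mul_div_assoc', div_le_iff₀ (by positivity)]
      nlinarith

theorem nhds_hasBasis_of_eq_iInf [TopologicalSpace X] {x : X}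
    (h : 𝓝 x = ⨅ ε ∈ Set.Ioi (0 : ℝ), 𝓟 {y | d x y < ε}) :
    (𝓝 x).HasBasis (0 < ·) fun ε => {y | d x y < ε} :=
  h ▸ hasBasis_biInf_principal'
    (fun a ha b hb => ⟨min a b, Set.mem_Ioi.2 (lt_min ha hb),
      fun _ hy => hy.trans_le (min_le_left a b), fun _ hy => hy.trans_le (min_le_right a b)⟩)
    ⟨1, Set.mem_Ioi.2 one_pos⟩

theorem IsUniformlyEquicontinuous.continuous [TopologicalSpace X]
    (hb : ∀ x, (𝓝 x).HasBasis (0 < ·) fun ε => {y | d x y < ε})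
    {H : Set (X → ℝ)} (hH : IsUniformlyEquicontinuous d H) {f : X → ℝ} (hf : f ∈ H) :
    Continuous f := by
  refine continuous_iff_continuousAt.2 fun x => ((hb x).tendsto_iff
    Metric.nhds_basis_closedBall).2 fun ε hε => ?_
  obtain ⟨δ, hδ, hH⟩ := hH ε hε
  exact ⟨δ, hδ, fun y hy => by simpa [Real.dist_eq, abs_sub_comm] using hH f hf x y hy⟩

end Equicontinuity

theorem rightUniformEquicontinuous_iff {G : Type*} [Group G] [TopologicalSpace G]
    {d : G → G → ℝ} (hinv : ∀ x y g : G, d (x * g) (y * g) = d x y)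
    (hb : (𝓝 (1 : G)).HasBasis (0 < ·) fun ε => {y | d 1 y < ε}) (H : Set (G → ℝ)) :
    (∀ ε > 0, ∃ U ∈ 𝓝 (1 : G), ∀ f ∈ H, ∀ x y : G, y * x⁻¹ ∈ U → |f x - f y| ≤ ε) ↔
      IsUniformlyEquicontinuous d H := by
  have hd : ∀ x y : G, d 1 (y * x⁻¹) = d x y := fun x y => by
    simpa using hinv x y x⁻¹
  refine forall₂_congr fun ε _ => ⟨?_, ?_⟩
  · rintro ⟨U, hU, hH⟩
    obtain ⟨δ, hδ, hδU⟩ := hb.mem_iff.1 hU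
    exact ⟨δ, hδ, fun f hf x y hxy => hH f hf x y (hδU (by simpa [hd] using hxy))⟩
  · rintro ⟨δ, hδ, hH⟩
    exact ⟨_, hb.mem_of_mem hδ, fun f hf x y hxy => hH f hf x y (by simpa [hd] using hxy)⟩

section TranslateDefect

variable {G : Type*} [Mul G] [MeasurableSpace G]

noncomputable def translateDefect (μ : Measure G) (g : G) (f : G → ℝ) : ℝ :=
  ∫ x, f (g * x) ∂μ - ∫ x, f x ∂μ

theorem translateDefect_div (μ : Measure G) (g : G) (f : G → ℝ) (M : ℝ) :
    translateDefect μ g (fun x => f x / M) = translateDefect μ g f / M := by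
  simp only [translateDefect, integral_div, sub_div]

theorem abs_integral_sub_integral_le {α : Type*} [MeasurableSpace α] {μ : Measure α}
    [IsProbabilityMeasure μ] {p q : α → ℝ} (hp : Integrable p μ) (hq : Integrable q μ) {η : ℝ}
    (hpq : ∀ x, |p x - q x| ≤ η) : |∫ x, p x ∂μ - ∫ x, q x ∂μ| ≤ η := by
  rw [← integral_sub hp hq]
  simpa using norm_integral_le_of_norm_le_const (μ := μ) (f := fun x => p x - q x)
    (ae_of_all _ hpq)

theorem abs_translateDefect_le [TopologicalSpace G] [ContinuousMul G] [OpensMeasurableSpace G]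
    {μ : Measure G} [IsProbabilityMeasure μ] (g : G) {f f' : G → ℝ}
    (hf : Continuous f) (hf' : Continuous f') {C η : ℝ} (hfC : ∀ x, |f x| ≤ C)
    (hf'C : ∀ x, |f' x| ≤ C) (hff' : ∀ x, |f x - f' x| ≤ η) :
    |translateDefect μ g f| ≤ |translateDefect μ g f'| + 2 * η := by
  have hint : ∀ {p : G → ℝ}, Continuous p → (∀ x, |p x| ≤ C) → Integrable p μ :=
    fun hp hpC => .of_bound hp.aestronglyMeasurable C (ae_of_all _ hpC)
  have hg := continuous_const_mul g
  have htrans := abs_integral_sub_integral_le (p := fun x => f (g * x))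
    (q := fun x => f' (g * x)) (hint (hf.comp hg) fun _ => hfC _)
    (hint (hf'.comp hg) fun _ => hf'C _) fun x => hff' (g * x)
  have huntrans := abs_integral_sub_integral_le (hint hf hfC) (hint hf' hf'C) hff'
  have hsplit : translateDefect μ g f = translateDefect μ g f' +
      ((∫ x, f (g * x) ∂μ - ∫ x, f' (g * x) ∂μ) - (∫ x, f x ∂μ - ∫ x, f' x ∂μ)) := by
    unfold translateDefect
    ring
  rw [hsplit]
  refine (abs_add_le _ _).trans (add_le_add_right ((abs_sub _ _).trans ?_) _)
  linarith

theorem eventually_abs_translateDefect_le_of_lipschitz {ι : Type*} {l : Filter ι}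
    {μ : ι → Measure G} {g : G} {d : G → G → ℝ} (hd : ∀ x y, 0 ≤ d x y)
    (h : ∀ ε > 0, ∀ᶠ i in l, ∀ f : G → ℝ, (∀ x y, |f x - f y| ≤ d x y) → (∀ x, |f x| ≤ 1) →
      |translateDefect (μ i) g f| ≤ ε)
    {K C : ℝ} (hK : 0 ≤ K) (hC : 0 ≤ C) {ε : ℝ} (hε : 0 < ε) :
    ∀ᶠ i in l, ∀ f : G → ℝ, (∀ x y, |f x - f y| ≤ K * d x y) → (∀ x, |f x| ≤ C) →
      |translateDefect (μ i) g f| ≤ ε := by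
  set M := K + C + 1
  have hM : 0 < M := by positivity
  filter_upwards [h (ε / M) (by positivity)] with i hi f hfK hfC
  have hscaled := hi (fun x => f x / M)
    (fun x y => by
      rw [div_sub_div_same, abs_div, abs_of_pos hM, div_le_iff₀ hM]
      nlinarith [hfK x y, hd x y])
    (fun x => by
      rw [abs_div, abs_of_pos hM, div_le_one hM]
      linarith [hfC x])
  rwa [translateDefect_div, abs_div, abs_of_pos hM, div_le_div_iff_of_pos_right hM] at hscaled

end TranslateDefect

/-- For a right-invariant compatible metric `d` on a topological group `G`, a net of
Borel probability measures UEB-converges to invariance iff it converges to invariance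
in the mass transportation distance over `d`, i.e. uniformly over all `f` that are
1-Lipschitz w.r.t. `d` and bounded by 1 in sup-norm. -/
theorem stmt12 {G ι : Type*} [Group G] [TopologicalSpace G] [IsTopologicalGroup G]
    [MeasurableSpace G] [BorelSpace G]
    (d : G → G → ℝ)
    (hsymm : ∀ x y, d x y = d y x)
    (heq : ∀ x y, (d x y = 0 ↔ x = y))
    (htri : ∀ x y z, d x z ≤ d x y + d y z)
    (hinv : ∀ x y g : G, d (x * g) (y * g) = d x y)
    (hcompat : ∀ x : G, 𝓝 x = ⨅ ε ∈ Set.Ioi (0 : ℝ), Filter.principal {y | d x y < ε})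
    (l : Filter ι) (μ : ι → Measure G) (hprob : ∀ i, IsProbabilityMeasure (μ i)) :
    UEBConvergesToInvariance l μ ↔
      ∀ g : G, ∀ ε > 0, ∀ᶠ i in l, ∀ f : G → ℝ,
        (∀ x y, |f x - f y| ≤ d x y) → (∀ x, |f x| ≤ 1) →
        |∫ x, f (g * x) ∂(μ i) - ∫ x, f x ∂(μ i)| ≤ ε := by
  have hd : IsPseudoMetric d := ⟨fun x => (heq x x).2 rfl, hsymm, htri⟩
  have hb x := nhds_hasBasis_of_eq_iInf (hcompat x)
  have hequi := rightUniformEquicontinuous_iff hinv (hb 1)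
  constructor
  · intro h g ε hε
    let L : Set (G → ℝ) := {f | (∀ x y, |f x - f y| ≤ d x y) ∧ ∀ x, |f x| ≤ 1}
    have hL : IsUniformlyEquicontinuous d L :=
      (isUniformlyEquicontinuous_lipschitz zero_le_one).mono fun f hf x y => by simpa using hf.1 x y
    filter_upwards [h g L ⟨1, fun f hf => hf.2⟩ ((hequi L).2 hL) ε hε] with i hi f hf₁ hf₂
    exact hi f ⟨hf₁, hf₂⟩
  · rintro h g H ⟨C, hC⟩ hH ε hε
    have hC' : ∀ f ∈ H, ∀ x, |f x| ≤ max C 0 := fun f hf x => (hC f hf x).trans (le_max_left _ _)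
    obtain ⟨δ, hδ, hosc⟩ := (hequi H).1 hH (ε / 4) (by positivity)
    set K := 2 * max C 0 / δ
    have hK : 0 ≤ K := by positivity
    filter_upwards [eventually_abs_translateDefect_le_of_lipschitz hd.nonneg (h g) hK
      (le_max_right C 0) (half_pos hε)] with i hi f hf
    have hf' := abs_infConv_le hd hK (hC' f hf)
    have hLip' := abs_infConv_sub_infConv_le hd hK (hC' f hf)
    calc |translateDefect (μ i) g f| ≤ |translateDefect (μ i) g (infConv d K f)| + 2 * (ε / 4) :=
          abs_translateDefect_le g ((hequi H).1 hH |>.continuous hb hf)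
            ((isUniformlyEquicontinuous_lipschitz hK).continuous hb hLip') (hC' f hf) hf'
            (abs_sub_infConv_le hd (hC' f hf) hδ (hosc f hf))
      _ ≤ ε / 2 + 2 * (ε / 4) := by gcongr; exact hi _ hLip' hf'
      _ = ε := by ring
end

section
/- Let H be a subset of the bounded right-uniformly continuous real-valued functions on a topological group G. Then H is UEB (norm-bounded and right-uniformly equicontinuous) if and only if H is norm-bounded and there exists a continuous right-invariant pseudo-metric d on G such that every f ∈ H is 1-Lipschitz with respect to d. -/
open Filter Topology

/-!
For the forward direction take `d x y = sup { |f (x g) - f (y g)| : f ∈ H, g ∈ G }`: it is finite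
because `H` is norm-bounded, right-invariant because the supremum runs over all right
translates, and continuous because `y x⁻¹ ∈ U` bounds `d x y` exactly as it bounds each
`|f x - f y|`. Conversely, right-invariance gives `d x y = d 1 (y x⁻¹)`, so the sets
`{u | d 1 u < ε}` are the identity neighbourhoods witnessing equicontinuity.
-/

section SupDist

variable {ι α : Type*} (F : ι → α → ℝ)

/-- Real `⨆` is `0` for an unbounded family, so the triangle inequality needs `F` bounded. -/
noncomputable def supDist (x y : α) : ℝ :=
  ⨆ i, |F i x - F i y|

variable {F}

theorem supDist_nonneg (x y : α) : 0 ≤ supDist F x y :=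
  Real.iSup_nonneg fun _ => abs_nonneg _

@[simp]
theorem supDist_self (x : α) : supDist F x x = 0 := by
  simp [supDist]

theorem supDist_comm (x y : α) : supDist F x y = supDist F y x := by
  simp only [supDist, abs_sub_comm]

theorem supDist_le {x y : α} {c : ℝ} (hc : 0 ≤ c) (h : ∀ i, |F i x - F i y| ≤ c) :
    supDist F x y ≤ c :=
  Real.iSup_le h hc

variable {C : ℝ} (hC : ∀ i x, |F i x| ≤ C)
include hC

theorem abs_sub_le_supDist (i : ι) (x y : α) : |F i x - F i y| ≤ supDist F x y := by
  refine le_ciSup (f := fun i => |F i x - F i y|) ⟨C + C, ?_⟩ i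
  rintro _ ⟨j, rfl⟩
  exact (abs_sub _ _).trans (add_le_add (hC j x) (hC j y))

theorem supDist_triangle (x y z : α) : supDist F x z ≤ supDist F x y + supDist F y z :=
  supDist_le (add_nonneg (supDist_nonneg x y) (supDist_nonneg y z)) fun i =>
    (abs_sub_le _ _ _).trans
      (add_le_add (abs_sub_le_supDist hC i x y) (abs_sub_le_supDist hC i y z))

end SupDist

theorem abs_sub_le_of_triangle {X : Type*} {d : X → X → ℝ} (hsymm : ∀ x y, d x y = d y x)
    (htri : ∀ x y z, d x z ≤ d x y + d y z) (x y x₀ y₀ : X) :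
    |d x y - d x₀ y₀| ≤ d x₀ x + d y₀ y := by
  have h₁ := htri x x₀ y
  have h₂ := htri x₀ y₀ y
  have h₃ := htri x₀ x y₀
  have h₄ := htri x y y₀
  rw [hsymm x x₀] at h₁
  rw [hsymm y y₀] at h₄
  rw [abs_sub_le_iff]
  constructor <;> linarith

theorem continuous_uncurry_of_tendsto_zero {X : Type*} [TopologicalSpace X] {d : X → X → ℝ}
    (hsymm : ∀ x y, d x y = d y x) (htri : ∀ x y z, d x z ≤ d x y + d y z)
    (hd : ∀ x₀, Tendsto (d x₀) (𝓝 x₀) (𝓝 0)) :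
    Continuous fun p : X × X => d p.1 p.2 := by
  refine continuous_iff_continuousAt.2 fun ⟨x₀, y₀⟩ => ?_
  rw [ContinuousAt, tendsto_iff_dist_tendsto_zero]
  have hsum : Tendsto (fun p : X × X => d x₀ p.1 + d y₀ p.2) (𝓝 (x₀, y₀)) (𝓝 0) := by
    simpa only [add_zero, Function.comp_def] using
      ((hd x₀).comp (continuousAt_fst (p := (x₀, y₀)))).add
        ((hd y₀).comp (continuousAt_snd (p := (x₀, y₀))))
  exact squeeze_zero (fun _ => dist_nonneg)
    (fun p => abs_sub_le_of_triangle hsymm htri p.1 p.2 x₀ y₀) hsum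

section RightUniformity

variable {G : Type*} [Group G]

noncomputable def rightSupDist (H : Set (G → ℝ)) : G → G → ℝ :=
  supDist fun p : H × G => fun x => p.1.1 (x * p.2)

theorem rightSupDist_mul_right (H : Set (G → ℝ)) (x y h : G) :
    rightSupDist H (x * h) (y * h) = rightSupDist H x y :=
  Equiv.iSup_congr ((Equiv.refl H).prodCongr (Equiv.mulLeft h)) fun p => by
    simp [mul_assoc]

section Bounded

variable {H : Set (G → ℝ)} {C : ℝ} (hC : ∀ f ∈ H, ∀ x, |f x| ≤ C)
include hC

theorem abs_sub_le_rightSupDist {f : G → ℝ} (hf : f ∈ H) (x y : G) :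
    |f x - f y| ≤ rightSupDist H x y := by
  simpa [rightSupDist] using
    abs_sub_le_supDist (fun (p : H × G) x => hC p.1 p.1.2 (x * p.2)) (⟨f, hf⟩, 1) x y

theorem rightSupDist_triangle (x y z : G) :
    rightSupDist H x z ≤ rightSupDist H x y + rightSupDist H y z :=
  supDist_triangle (fun (p : H × G) x => hC p.1 p.1.2 (x * p.2)) x y z

end Bounded

variable [TopologicalSpace G]

def RightUniformlySmall (d : G → G → ℝ) : Prop :=
  ∀ ε > 0, ∃ U ∈ 𝓝 (1 : G), ∀ x y : G, y * x⁻¹ ∈ U → d x y ≤ ε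

theorem RightUniformlySmall.tendsto_nhds_zero [ContinuousMul G] {d : G → G → ℝ}
    (hsmall : RightUniformlySmall d) (hnonneg : ∀ x y, 0 ≤ d x y) (x₀ : G) :
    Tendsto (d x₀) (𝓝 x₀) (𝓝 0) := by
  refine tendsto_order.2 ⟨fun a ha => Eventually.of_forall fun y => ha.trans_le (hnonneg x₀ y),
    fun a ha => ?_⟩
  obtain ⟨U, hU, hUd⟩ := hsmall (a / 2) (half_pos ha)
  have hx₀ : Tendsto (· * x₀⁻¹) (𝓝 x₀) (𝓝 1) :=
    (continuous_mul_const x₀⁻¹).tendsto' x₀ 1 (mul_inv_cancel x₀)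
  filter_upwards [hx₀ hU] with y hy
  exact (hUd x₀ y hy).trans_lt (half_lt_self ha)

theorem rightUniformlySmall_of_continuous {d : G → G → ℝ}
    (hcont : Continuous fun p : G × G => d p.1 p.2) (hself : d 1 1 = 0)
    (hinv : ∀ x y g : G, d (x * g) (y * g) = d x y) :
    RightUniformlySmall d := by
  intro ε hε
  have hU : {u : G | d 1 u < ε} ∈ 𝓝 (1 : G) :=
    (hcont.comp (Continuous.prodMk_right 1)).continuousAt.preimage_mem_nhds
      (Iio_mem_nhds (hself.trans_lt hε))
  refine ⟨_, hU, fun x y hxy => ?_⟩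
  have hd : d x y = d 1 (y * x⁻¹) := by simpa using hinv 1 (y * x⁻¹) x
  exact hd.trans_le hxy.le

theorem rightUniformlySmall_rightSupDist {H : Set (G → ℝ)}
    (hequi : ∀ ε > 0, ∃ U ∈ 𝓝 (1 : G), ∀ f ∈ H, ∀ x y : G, y * x⁻¹ ∈ U → |f x - f y| ≤ ε) :
    RightUniformlySmall (rightSupDist H) := by
  intro ε hε
  obtain ⟨U, hU, hUf⟩ := hequi ε hε
  refine ⟨U, hU, fun x y hxy => supDist_le hε.le fun p => hUf _ p.1.2 _ _ ?_⟩
  rwa [mul_inv_rev, mul_assoc, mul_inv_cancel_left]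

end RightUniformity

/-- A norm-bounded family `H` of real functions on a topological group `G` is
right-uniformly equicontinuous iff there is a continuous right-invariant pseudo-metric
`d` on `G` such that every `f ∈ H` is `1`-Lipschitz with respect to `d`. -/
theorem stmt13 {G : Type*} [Group G] [TopologicalSpace G] [IsTopologicalGroup G]
    (H : Set (G → ℝ)) :
    ((∃ C : ℝ, ∀ f ∈ H, ∀ x, |f x| ≤ C) ∧
      (∀ ε > 0, ∃ U ∈ 𝓝 (1 : G), ∀ f ∈ H, ∀ x y : G, y * x⁻¹ ∈ U → |f x - f y| ≤ ε)) ↔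
    ((∃ C : ℝ, ∀ f ∈ H, ∀ x, |f x| ≤ C) ∧
      ∃ d : G → G → ℝ,
        Continuous (fun p : G × G => d p.1 p.2) ∧
        (∀ x, d x x = 0) ∧ (∀ x y, 0 ≤ d x y) ∧ (∀ x y, d x y = d y x) ∧
        (∀ x y z, d x z ≤ d x y + d y z) ∧
        (∀ x y g : G, d (x * g) (y * g) = d x y) ∧
        (∀ f ∈ H, ∀ x y, |f x - f y| ≤ d x y)) := by
  constructor
  · rintro ⟨⟨C, hC⟩, hequi⟩
    have htri := rightSupDist_triangle hC
    have hcont := continuous_uncurry_of_tendsto_zero supDist_comm htri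
      ((rightUniformlySmall_rightSupDist hequi).tendsto_nhds_zero supDist_nonneg)
    refine ⟨⟨C, hC⟩, rightSupDist H, hcont, supDist_self, supDist_nonneg, supDist_comm, htri,
      rightSupDist_mul_right H, fun f hf => abs_sub_le_rightSupDist hC hf⟩
  · rintro ⟨hbdd, d, hcont, hself, -, -, -, hinv, hdom⟩
    refine ⟨hbdd, fun ε hε => ?_⟩
    obtain ⟨U, hU, hUd⟩ := rightUniformlySmall_of_continuous hcont (hself 1) hinv ε hε
    exact ⟨U, hU, fun f hf x y hxy => (hdom f hf x y).trans (hUd x y hxy)⟩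
end

section
/- Let X be a uniform space, d a uniformly continuous pseudo-metric on X, and (μ_i)_{i∈I} a Lévy net of Borel probability measures on X. For each i and each 1-Lipschitz function f : (X,d) → ℝ, let m_i(f) be a median of f with respect to μ_i. Then for every ε > 0, sup over 1-Lipschitz f of μ_i({x : |f(x) − m_i(f)| > ε}) converges to 0 along the net. -/
open Filter Topology MeasureTheory

/-- A net `(μ i)` of Borel probability measures on a uniform space `X` is a Lévy net
if for every family `(B i)` of Borel sets with `liminf μ_i(B_i) > 0` and every open
entourage `U` of `X`, `μ_i(U[B_i]) → 1`. -/
def LevyNet {X ι : Type*} [UniformSpace X] [MeasurableSpace X] (l : Filter ι)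
    (μ : ι → Measure X) : Prop :=
  ∀ B : ι → Set X, (∀ i, MeasurableSet (B i)) →
    0 < l.liminf (fun i => μ i (B i)) →
    ∀ U ∈ uniformity X, IsOpen U →
      Tendsto (fun i => μ i {y | ∃ x ∈ B i, (x, y) ∈ U}) l (𝓝 1)

/-!
If a 1-Lipschitz `f` gave mass at least `δ / 2` to `{m + ε ≤ f}`, where `m` is a median, then
the Lévy property, applied to a thickening by an open entourage on which `d < ε`, would give
more than half of the mass to a set inside `{m < f}`, contradicting `μ {f ≤ m} ≥ 1 / 2`; the
same holds for `-f`. Uniformity in `f` comes from choosing, for each index, an offending set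
(if any) and feeding this single family of sets to the Lévy property.
-/

open scoped Uniformity

theorem tendsto_nhds_zero_of_uniformContinuous {X : Type*} [UniformSpace X] {d : X → X → ℝ}
    (hd0 : ∀ x, d x x = 0) (huc : UniformContinuous fun p : X × X => d p.1 p.2) :
    Tendsto (fun p : X × X => d p.1 p.2) (𝓤 X) (𝓝 0) := by
  have hdiag : Tendsto (fun p : X × X => ((p.1, p.1), p)) (𝓤 X) (𝓤 (X × X)) := by
    rw [uniformity_prod]
    exact tendsto_inf.2 ⟨tendsto_comap_iff.2 (tendsto_diag_uniformity _ _),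
      tendsto_comap_iff.2 tendsto_id⟩
  have := tendsto_uniformity_iff_dist_tendsto_zero.1 (Tendsto.comp huc hdiag)
  rw [tendsto_zero_iff_abs_tendsto_zero]
  simpa [hd0, Real.dist_eq, Function.comp_def] using this

theorem uniformContinuous_of_abs_sub_le {X : Type*} [UniformSpace X] {d : X → X → ℝ}
    (hd0 : ∀ x, d x x = 0) (huc : UniformContinuous fun p : X × X => d p.1 p.2)
    {f : X → ℝ} (hf : ∀ x y, |f x - f y| ≤ d x y) : UniformContinuous f := by
  rw [UniformContinuous, tendsto_uniformity_iff_dist_tendsto_zero]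
  exact squeeze_zero (fun _ => dist_nonneg) (fun p => (Real.dist_eq _ _).trans_le (hf _ _))
    (tendsto_nhds_zero_of_uniformContinuous hd0 huc)

theorem LevyNet.eventually_lt_measure_thickening {X ι : Type*} [UniformSpace X]
    [MeasurableSpace X] {l : Filter ι} {μ : ι → Measure X} (hLevy : LevyNet l μ)
    (hprob : ∀ i, IsProbabilityMeasure (μ i)) {U : Set (X × X)} (hU : U ∈ 𝓤 X) (hUo : IsOpen U)
    {η r : ENNReal} (hη : 0 < η) (hr : r < 1) :
    ∀ᶠ i in l, ∀ B, MeasurableSet B → η ≤ μ i B → r < μ i {y | ∃ x ∈ B, (x, y) ∈ U} := by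
  classical
  by_contra hne
  rw [not_eventually] at hne
  let B i : Set X :=
    if h : ∃ B, MeasurableSet B ∧ η ≤ μ i B ∧ μ i {y | ∃ x ∈ B, (x, y) ∈ U} ≤ r
    then h.choose else Set.univ
  have hB : ∀ i, MeasurableSet (B i) ∧ min η 1 ≤ μ i (B i) := by
    intro i
    unfold B
    split_ifs with h
    · exact ⟨h.choose_spec.1, min_le_left _ _ |>.trans h.choose_spec.2.1⟩
    · exact ⟨MeasurableSet.univ, by simp⟩
  have hliminf : 0 < l.liminf fun i => μ i (B i) :=
    (lt_min hη one_pos).trans_le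
      (le_liminf_of_le (by isBoundedDefault) (Eventually.of_forall fun i => (hB i).2))
  have hthick := (hLevy B (fun i => (hB i).1) hliminf U hU hUo).eventually (eventually_gt_nhds hr)
  obtain ⟨i, hbad, hgood⟩ := (hne.and_eventually hthick).exists
  push Not at hbad
  have hBi : B i = hbad.choose := dif_pos hbad
  exact (hbad.choose_spec.2.2).not_gt (hBi ▸ hgood)

theorem measure_setOf_add_le_lt {X : Type*} [TopologicalSpace X] [MeasurableSpace X]
    [OpensMeasurableSpace X] {ν : Measure X} [IsProbabilityMeasure ν] {f : X → ℝ}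
    (hf : Continuous f) {U : Set (X × X)} {ε : ℝ} (hU : ∀ x y, (x, y) ∈ U → |f x - f y| < ε)
    {η : ENNReal} (hthick : ∀ B, MeasurableSet B → η ≤ ν B → 1 / 2 < ν {y | ∃ x ∈ B, (x, y) ∈ U})
    {c : ℝ} (hc : 1 / 2 ≤ ν {x | f x ≤ c}) : ν {x | c + ε ≤ f x} < η := by
  by_contra! h
  have hsub : {y | ∃ x ∈ {x | c + ε ≤ f x}, (x, y) ∈ U} ⊆ {x | f x ≤ c}ᶜ := by
    rintro y ⟨x, hx, hxy⟩
    have := (abs_lt.1 (hU x y hxy)).2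
    simp only [Set.mem_ofPred_eq, Set.mem_compl_iff, not_le] at hx ⊢
    linarith
  have hhalf := (hthick _ (measurableSet_le measurable_const hf.measurable) h).trans_le
    (measure_mono hsub)
  rw [prob_compl_eq_one_sub (measurableSet_le hf.measurable measurable_const),
    lt_tsub_iff_right] at hhalf
  exact (hhalf.trans_le' (add_le_add_right hc _)).ne (ENNReal.add_halves 1)

theorem stmt14_general {X ι : Type*} [UniformSpace X] [MeasurableSpace X] [BorelSpace X]
    (l : Filter ι) (μ : ι → Measure X) (hprob : ∀ i, IsProbabilityMeasure (μ i))
    (hLevy : LevyNet l μ)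
    (d : X → X → ℝ) (hd0 : ∀ x, d x x = 0)
    (huc : UniformContinuous (fun p : X × X => d p.1 p.2))
    (m : ι → (X → ℝ) → ℝ)
    (hm : ∀ i, ∀ f : X → ℝ, (∀ x y, |f x - f y| ≤ d x y) →
      (1 / 2 : ENNReal) ≤ μ i {x | m i f ≤ f x} ∧
      (1 / 2 : ENNReal) ≤ μ i {x | f x ≤ m i f})
    (ε : ℝ) (hε : 0 < ε) :
    ∀ δ : ENNReal, 0 < δ → ∀ᶠ i in l, ∀ f : X → ℝ,
      (∀ x y, |f x - f y| ≤ d x y) →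
      μ i {x | ε < |f x - m i f|} ≤ δ := by
  intro δ hδ
  obtain ⟨U, ⟨hU, hUo⟩, hUd⟩ := uniformity_hasBasis_open.mem_iff.1
    ((tendsto_nhds_zero_of_uniformContinuous hd0 huc).eventually (gt_mem_nhds hε))
  have hUlip : ∀ g : X → ℝ, (∀ x y, |g x - g y| ≤ d x y) →
      ∀ x y, (x, y) ∈ U → |g x - g y| < ε :=
    fun g hg x y hxy => (hg x y).trans_lt (hUd hxy)
  filter_upwards [hLevy.eventually_lt_measure_thickening hprob hU hUo (ENNReal.half_pos hδ.ne')
    (ENNReal.half_lt_self one_ne_zero ENNReal.one_ne_top)] with i hi f hf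
  have hfc := (uniformContinuous_of_abs_sub_le hd0 huc hf).continuous
  have hf_neg : ∀ x y, |(-f) x - (-f) y| ≤ d x y := fun x y => by
    rw [Pi.neg_apply, Pi.neg_apply, neg_sub_neg, abs_sub_comm]
    exact hf x y
  have hupper := measure_setOf_add_le_lt hfc (hUlip f hf) hi (hm i f hf).2
  have hlower := measure_setOf_add_le_lt hfc.neg (hUlip _ hf_neg) hi (c := -m i f)
    (by simpa only [Pi.neg_apply, neg_le_neg_iff] using (hm i f hf).1)
  calc μ i {x | ε < |f x - m i f|}
      ≤ μ i ({x | m i f + ε ≤ f x} ∪ {x | -m i f + ε ≤ (-f) x}) := by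
        refine measure_mono fun x hx => ?_
        simp only [Set.mem_ofPred_eq, Set.mem_union, Pi.neg_apply, lt_abs] at hx ⊢
        rcases hx with hx | hx
        exacts [Or.inl (by linarith), Or.inr (by linarith)]
    _ ≤ δ / 2 + δ / 2 := (measure_union_le _ _).trans (add_le_add hupper.le hlower.le)
    _ = δ := ENNReal.add_halves δ

/-- Gromov–Milman: along a Lévy net, 1-Lipschitz functions (for a uniformly continuous
pseudo-metric `d`) concentrate around their medians, uniformly over all such functions. -/
theorem stmt14 {X ι : Type*} [UniformSpace X] [MeasurableSpace X] [BorelSpace X]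
    (l : Filter ι) (μ : ι → Measure X) (hprob : ∀ i, IsProbabilityMeasure (μ i))
    (hLevy : LevyNet l μ)
    (d : X → X → ℝ) (hd0 : ∀ x, d x x = 0) (hsymm : ∀ x y, d x y = d y x)
    (htri : ∀ x y z, d x z ≤ d x y + d y z)
    (huc : UniformContinuous (fun p : X × X => d p.1 p.2))
    (m : ι → (X → ℝ) → ℝ)
    (hm : ∀ i, ∀ f : X → ℝ, (∀ x y, |f x - f y| ≤ d x y) →
      (1 / 2 : ENNReal) ≤ μ i {x | m i f ≤ f x} ∧
      (1 / 2 : ENNReal) ≤ μ i {x | f x ≤ m i f})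
    (ε : ℝ) (hε : 0 < ε) :
    ∀ δ : ENNReal, 0 < δ → ∀ᶠ i in l, ∀ f : X → ℝ,
      (∀ x y, |f x - f y| ≤ d x y) →
      μ i {x | ε < |f x - m i f|} ≤ δ :=
  stmt14_general l μ hprob hLevy d hd0 huc m hm ε hε
end

section
/- Let G be a topological group admitting a net (μ_i)_{i∈I} of Borel probability measures UEB-converging to invariance, and let d be a continuous pseudo-metric on a G-flow X. Then there exists a point x₀ ∈ X with sup_{g∈G} d(x₀, g·x₀) ≤ sup_{α>0} liminf_{i→I} sup_{x∈X} ObsDiam(G, d_{G,x}, μ_i; −α). -/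
/-!
Fix `s` above the right-hand side and pass to an ultrafilter `U` on which, for every `α > 0`,
`sup_x ObsDiam(G, d_{G,x}, μ_i; -α) < s` holds `U`-eventually. By compactness, the push-forwards
of the `μ_i` along an orbit map `g ↦ g • x₁` have a point `z` in the support of their limit
along `U`, and UEB-convergence makes this limit support `G`-invariant, so `g • z` is in it too.
Small balls around `z` and `g • z` then carry mass bounded below, and the `1`-Lipschitz
function `h ↦ d (h • x₁) z` separates them, which forces `ObsDiam ≥ d(z, g • z) - ε`; hence
`d(z, g • z) ≤ s` for all `g`. A minimiser of the lower semicontinuous function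
`z ↦ sup_g d(z, g • z)` on the compact flow is then the required point.
-/

open Filter Topology MeasureTheory Pointwise

/-- The `α`-partial diameter of a Borel probability measure `ν` on `ℝ`:
the infimum of diameters of Borel sets of `ν`-measure at least `1 − α`. -/
noncomputable def partDiam (ν : MeasureTheory.Measure ℝ) (α : ℝ) : ENNReal :=
  ⨅ (B : Set ℝ) (_ : MeasurableSet B ∧ 1 - ENNReal.ofReal α ≤ ν B), EMetric.diam B

/-- Gromov's `α`-observable diameter of `(X, d, μ)`: the supremum of the partial
diameters of the push-forwards of `μ` under (measurable) `1`-Lipschitz functions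
`(X, d) → ℝ`. -/
noncomputable def obsDiam {X : Type*} [MeasurableSpace X] (d : X → X → ℝ)
    (μ : MeasureTheory.Measure X) (α : ℝ) : ENNReal :=
  ⨆ (f : X → ℝ) (_ : Measurable f ∧ ∀ x y, |f x - f y| ≤ d x y),
    partDiam (μ.map f) α

theorem partDiam_antitone (ν : Measure ℝ) : Antitone (partDiam ν) := fun _ _ hαβ =>
  le_iInf₂ fun B hB => iInf₂_le B
    ⟨hB.1, (tsub_le_tsub_left (ENNReal.ofReal_le_ofReal hαβ) 1).trans hB.2⟩

theorem obsDiam_antitone {X : Type*} [MeasurableSpace X] (d : X → X → ℝ) (μ : Measure X) :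
    Antitone (obsDiam d μ) := fun _ _ hαβ =>
  iSup₂_mono fun _ _ => partDiam_antitone _ hαβ

theorem partDiam_map_le_obsDiam {X : Type*} [MeasurableSpace X] {d : X → X → ℝ}
    (μ : Measure X) {f : X → ℝ} (hf : Measurable f) (hlip : ∀ x y, |f x - f y| ≤ d x y)
    (α : ℝ) : partDiam (μ.map f) α ≤ obsDiam d μ α :=
  le_iSup₂ (f := fun f (_ : Measurable f ∧ ∀ x y, |f x - f y| ≤ d x y) =>
    partDiam (μ.map f) α) f ⟨hf, hlip⟩

theorem nonempty_inter_of_one_sub_le_of_lt {Ω : Type*} [MeasurableSpace Ω] {μ : Measure Ω}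
    [IsProbabilityMeasure μ] {s t : Set Ω} (ht : MeasurableSet t) {a : ENNReal}
    (hs : 1 - a ≤ μ s) (hat : a < μ t) : (s ∩ t).Nonempty := by
  refine nonempty_inter_of_measure_lt_add μ ht (Set.subset_univ s) (Set.subset_univ t) ?_
  have ha : a ≤ 1 := hat.le.trans prob_le_one
  rw [measure_univ]
  calc (1 : ENNReal) = 1 - a + a := (tsub_add_cancel_of_le ha).symm
    _ < 1 - a + μ t := ENNReal.add_lt_add_left (ENNReal.sub_ne_top ENNReal.one_ne_top) hat
    _ ≤ μ s + μ t := by gcongr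

theorem ofReal_sub_le_partDiam_map {Ω : Type*} [MeasurableSpace Ω] {μ : Measure Ω}
    [IsProbabilityMeasure μ] {f : Ω → ℝ} (hf : Measurable f) {a b α : ℝ}
    (ha : ENNReal.ofReal α < μ {x | f x ≤ a}) (hb : ENNReal.ofReal α < μ {x | b ≤ f x}) :
    ENNReal.ofReal (b - a) ≤ partDiam (μ.map f) α := by
  refine le_iInf₂ fun B ⟨hB, hBμ⟩ => ?_
  rw [Measure.map_apply hf hB] at hBμ
  obtain ⟨x, hxB, hxa⟩ := nonempty_inter_of_one_sub_le_of_lt (hf measurableSet_Iic) hBμ ha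
  obtain ⟨y, hyB, hyb⟩ := nonempty_inter_of_one_sub_le_of_lt (hf measurableSet_Ici) hBμ hb
  calc ENNReal.ofReal (b - a) ≤ ENNReal.ofReal (dist (f y) (f x)) :=
        ENNReal.ofReal_le_ofReal ((sub_le_sub hyb hxa).trans (le_abs_self _))
    _ = edist (f y) (f x) := (edist_dist _ _).symm
    _ ≤ Metric.ediam B := Metric.edist_le_ediam_of_mem hyB hxB

theorem integral_le_measureReal_of_le_indicator {Ω : Type*} [MeasurableSpace Ω]
    {μ : Measure Ω} [IsFiniteMeasure μ] {ψ : Ω → ℝ} {s : Set Ω} (hs : MeasurableSet s)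
    (hψ₀ : 0 ≤ ψ) (hψ : ψ ≤ s.indicator 1) : ∫ x, ψ x ∂μ ≤ μ.real s :=
  (integral_mono_of_nonneg (ae_of_all _ hψ₀) ((integrable_const 1).indicator hs)
    (ae_of_all _ hψ)).trans_eq (integral_indicator_one hs)

theorem exists_continuous_mem_Icc_eq_one_of_isOpen {X : Type*} [TopologicalSpace X]
    [NormalSpace X] [T1Space X] {V : Set X} (hV : IsOpen V) {z : X} (hz : z ∈ V) :
    ∃ χ : C(X, ℝ), (∀ w, χ w ∈ Set.Icc (0 : ℝ) 1) ∧ (∀ w ∉ V, χ w = 0) ∧ χ z = 1 := by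
  obtain ⟨χ, hχV, hχz, hχ⟩ := exists_continuous_zero_one_of_isClosed hV.isClosed_compl
    isClosed_singleton (Set.disjoint_singleton_right.2 (not_not.2 hz))
  exact ⟨χ, hχ, fun w hw => hχV hw, hχz rfl⟩

section LimitSupport

variable {Γ X ι : Type*} [MeasurableSpace Γ] [TopologicalSpace X]

/-- `z` lies in the support of the limit along `F` of the push-forwards `q_* (μ i)`; this is
phrased through continuous bumps, so that no limit measure has to be constructed. -/
def MemLimitSupport (F : Filter ι) (μ : ι → Measure Γ) (q : Γ → X) (z : X) : Prop :=
  ∀ V, IsOpen V → z ∈ V → ∃ χ : C(X, ℝ), (∀ w, χ w ∈ Set.Icc (0 : ℝ) 1) ∧ (∀ w ∉ V, χ w = 0) ∧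
    ∃ c > 0, ∀ᶠ i in F, c ≤ ∫ a, χ (q a) ∂μ i

variable [TopologicalSpace Γ] [OpensMeasurableSpace Γ]

theorem integrable_comp_of_mem_Icc {μ : Measure Γ} [IsFiniteMeasure μ] {q : Γ → X}
    (hq : Continuous q) {χ : C(X, ℝ)} (hχ : ∀ w, χ w ∈ Set.Icc (0 : ℝ) 1) :
    Integrable (fun a => χ (q a)) μ :=
  Integrable.of_mem_Icc 0 1 (χ.continuous.comp hq).measurable.aemeasurable
    (ae_of_all _ fun a => hχ (q a))

theorem exists_memLimitSupport [CompactSpace X] [T2Space X] (U : Ultrafilter ι)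
    (μ : ι → Measure Γ) [∀ i, IsProbabilityMeasure (μ i)] {q : Γ → X} (hq : Continuous q) :
    ∃ z, MemLimitSupport (U : Filter ι) μ q z := by
  by_contra! hnot
  simp only [MemLimitSupport, not_forall, not_exists, not_and] at hnot
  have hsmall : ∀ z, ∃ χ : C(X, ℝ), (∀ w, χ w ∈ Set.Icc (0 : ℝ) 1) ∧ χ z = 1 ∧
      ∀ c > 0, ∀ᶠ i in (U : Filter ι), ∫ a, χ (q a) ∂μ i < c := by
    intro z
    obtain ⟨V, hV, hzV, hVbad⟩ := hnot z
    obtain ⟨χ, hχ, hχV, hχz⟩ := exists_continuous_mem_Icc_eq_one_of_isOpen hV hzV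
    refine ⟨χ, hχ, hχz, fun c hc => ?_⟩
    simpa only [not_le] using Ultrafilter.eventually_not.2 (hVbad χ hχ hχV c hc)
  choose χ hχ hχz hχsmall using hsmall
  obtain ⟨T, hT⟩ := isCompact_univ.elim_finite_subcover (fun z => {w | 1 / 2 < χ z w})
    (fun z => isOpen_lt continuous_const (χ z).continuous)
    (fun z _ => Set.mem_iUnion.2 ⟨z, by norm_num [hχz z]⟩)
  have hcover : ∀ w, (1 / 2 : ℝ) ≤ ∑ z ∈ T, χ z w := by
    intro w
    obtain ⟨z, hzT, hzw⟩ := Set.mem_iUnion₂.1 (hT (Set.mem_univ w))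
    exact hzw.le.trans (Finset.single_le_sum (fun z _ => (hχ z w).1) hzT)
  -- each bump has mass below `c` along `U`, but together they carry mass at least `1 / 2`
  set c : ℝ := 1 / (2 * (T.card + 1))
  obtain ⟨i, hi⟩ := ((Filter.eventually_all_finset T).2 fun z _ =>
    hχsmall z c (by positivity)).exists
  have hint : ∀ z, Integrable (fun a => χ z (q a)) (μ i) := fun z =>
    integrable_comp_of_mem_Icc hq (hχ z)
  have hlower : (1 / 2 : ℝ) ≤ ∑ z ∈ T, ∫ a, χ z (q a) ∂μ i := by
    rw [← integral_finsetSum T fun z _ => hint z]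
    calc (1 / 2 : ℝ) = ∫ _, (1 / 2 : ℝ) ∂μ i := by simp
      _ ≤ ∫ a, ∑ z ∈ T, χ z (q a) ∂μ i := integral_mono (integrable_const _)
          (integrable_finsetSum T fun z _ => hint z) fun a => hcover (q a)
  have hupper : ∑ z ∈ T, ∫ a, χ z (q a) ∂μ i ≤ T.card * c := by
    simpa using Finset.sum_le_card_nsmul T _ c fun z hz => (hi z hz).le
  have hc : (T.card : ℝ) * c < 1 / 2 := by
    rw [mul_one_div, div_lt_div_iff₀ (by positivity) (by norm_num)]
    linarith
  linarith

theorem MemLimitSupport.exists_eventually_lt_measure {F : Filter ι} {μ : ι → Measure Γ}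
    [∀ i, IsFiniteMeasure (μ i)] {q : Γ → X} {z : X} (hz : MemLimitSupport F μ q z)
    (hq : Continuous q) {V : Set X} (hV : IsOpen V) (hzV : z ∈ V) :
    ∃ α > 0, ∀ᶠ i in F, ENNReal.ofReal α < μ i (q ⁻¹' V) := by
  obtain ⟨χ, hχ, hχV, c, hc, hev⟩ := hz V hV hzV
  refine ⟨c / 2, half_pos hc, hev.mono fun i hi => ?_⟩
  have hle : ∫ a, χ (q a) ∂μ i ≤ (μ i).real (q ⁻¹' V) := by
    refine integral_le_measureReal_of_le_indicator (hV.preimage hq).measurableSet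
      (fun a => (hχ (q a)).1) fun a => ?_
    by_cases ha : q a ∈ V
    · simpa [ha] using (hχ (q a)).2
    · simp [ha, hχV _ ha]
  rw [← ofReal_measureReal]
  exact (ENNReal.ofReal_lt_ofReal_iff (by linarith)).2 (by linarith)

end LimitSupport

theorem ofReal_sub_le_obsDiam_of_memLimitSupport {Γ X ι : Type*} [MeasurableSpace Γ]
    [TopologicalSpace Γ] [OpensMeasurableSpace Γ] [TopologicalSpace X] {F : Filter ι}
    {μ : ι → Measure Γ} [∀ i, IsProbabilityMeasure (μ i)] {q : Γ → X} (hq : Continuous q)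
    {d : X → X → ℝ} (hsymm : ∀ x y, d x y = d y x) (htri : ∀ x y z, d x z ≤ d x y + d y z)
    (hcont : Continuous fun p : X × X => d p.1 p.2) {z z' : X}
    (hz : MemLimitSupport F μ q z) (hz' : MemLimitSupport F μ q z')
    (hd0z : d z z = 0) (hd0z' : d z' z' = 0) {ε : ℝ} (hε : 0 < ε) :
    ∃ α > 0, ∀ᶠ i in F,
      ENNReal.ofReal (d z z' - ε) ≤ obsDiam (fun a b => d (q a) (q b)) (μ i) α := by
  have hball : ∀ y, IsOpen {w | d w y < ε / 2} := fun y =>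
    isOpen_lt (hcont.comp (continuous_id.prodMk continuous_const)) continuous_const
  obtain ⟨α, hα, hev⟩ := hz.exists_eventually_lt_measure hq (hball z) (by simp [hd0z, hε])
  obtain ⟨α', hα', hev'⟩ :=
    hz'.exists_eventually_lt_measure hq (hball z') (by simp [hd0z', hε])
  refine ⟨min α α', lt_min hα hα', (hev.and hev').mono fun i ⟨hi, hi'⟩ => ?_⟩
  set f : Γ → ℝ := fun a => d (q a) z
  have hlip : ∀ a b, |f a - f b| ≤ d (q a) (q b) := fun a b => abs_sub_le_iff.2
    ⟨by linarith [htri (q a) (q b) z], by linarith [htri (q b) (q a) z, hsymm (q a) (q b)]⟩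
  have hf : Measurable f := (hcont.comp (hq.prodMk continuous_const)).measurable
  have hnear : ENNReal.ofReal (min α α') < μ i {a | f a ≤ ε / 2} :=
    (ENNReal.ofReal_le_ofReal (min_le_left _ _)).trans_lt
      (hi.trans_le (measure_mono fun a (ha : d (q a) z < ε / 2) => ha.le))
  have hfar : ENNReal.ofReal (min α α') < μ i {a | d z z' - ε / 2 ≤ f a} := by
    refine (ENNReal.ofReal_le_ofReal (min_le_right _ _)).trans_lt
      (hi'.trans_le (measure_mono fun a (ha : d (q a) z' < ε / 2) => ?_))
    show d z z' - ε / 2 ≤ d (q a) z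
    linarith [htri z (q a) z', hsymm z (q a)]
  calc ENNReal.ofReal (d z z' - ε) = ENNReal.ofReal (d z z' - ε / 2 - ε / 2) := by ring_nf
    _ ≤ partDiam ((μ i).map f) (min α α') := ofReal_sub_le_partDiam_map hf hnear hfar
    _ ≤ _ := partDiam_map_le_obsDiam _ hf hlip _

section Action

variable {G X : Type*} [Group G] [TopologicalSpace G] [TopologicalSpace X] [CompactSpace X]
  [MulAction G X] [ContinuousSMul G X]

theorem eventually_nhds_one_forall_abs_smul_sub_lt {χ : X → ℝ}
    (hχ : Continuous χ) {ε : ℝ} (hε : 0 < ε) :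
    ∀ᶠ u in 𝓝 (1 : G), ∀ w : X, |χ (u • w) - χ w| < ε := by
  have hcont : Continuous fun p : G × X => |χ (p.1 • p.2) - χ p.2| :=
    ((hχ.comp continuous_smul).sub (hχ.comp continuous_snd)).abs
  simpa using isCompact_univ.eventually_forall_of_forall_eventually fun w _ =>
    (hcont.tendsto ((1 : G), w)).eventually (gt_mem_nhds (by simpa using hε))

variable [MeasurableSpace G] {ι : Type*}

theorem UEBConvergesToInvariance.eventually_abs_integral_smul_sub_le {l : Filter ι}
    {μ : ι → Measure G} (hUEB : UEBConvergesToInvariance l μ) (χ : C(X, ℝ)) (x : X) (g : G) {ε : ℝ} (hε : 0 < ε) :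
    ∀ᶠ i in l, |∫ a, χ ((g * a) • x) ∂μ i - ∫ a, χ (a • x) ∂μ i| ≤ ε := by
  have hbdd : ∃ C : ℝ, ∀ f ∈ ({fun a : G => χ (a • x)} : Set (G → ℝ)), ∀ a, |f a| ≤ C :=
    ⟨‖BoundedContinuousFunction.mkOfCompact χ‖, fun f hf a => by
      rw [Set.mem_singleton_iff.1 hf, ← Real.norm_eq_abs]
      exact (BoundedContinuousFunction.mkOfCompact χ).norm_coe_le_norm (a • x)⟩
  have hequi : ∀ δ > 0, ∃ U ∈ 𝓝 (1 : G), ∀ f ∈ ({fun a : G => χ (a • x)} : Set (G → ℝ)),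
      ∀ a b : G, b * a⁻¹ ∈ U → |f a - f b| ≤ δ := by
    intro δ hδ
    refine ⟨_, eventually_nhds_one_forall_abs_smul_sub_lt χ.continuous hδ,
      fun f hf a b hab => ?_⟩
    rw [Set.mem_singleton_iff.1 hf, abs_sub_comm]
    simpa [← mul_smul] using (hab (a • x)).le
  simpa using hUEB g _ hbdd hequi ε hε

theorem MemLimitSupport.smul {l F : Filter ι} {μ : ι → Measure G}
    (hUEB : UEBConvergesToInvariance l μ) (hF : F ≤ l) {x z : X}
    (hz : MemLimitSupport F μ (· • x) z) (g : G) : MemLimitSupport F μ (· • x) (g • z) := by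
  intro V hV hgzV
  obtain ⟨χ, hχ, hχV, c, hc, hev⟩ :=
    hz _ (hV.preimage (continuous_const_smul g)) (show g • z ∈ V from hgzV)
  let χ' : C(X, ℝ) := χ.comp ⟨(g⁻¹ • ·), continuous_const_smul _⟩
  refine ⟨χ', fun w => hχ _, fun w hw => hχV _ (by simpa using hw), c / 2, half_pos hc, ?_⟩
  filter_upwards [hev, hF (hUEB.eventually_abs_integral_smul_sub_le χ x g⁻¹ (half_pos hc))]
    with i hi hUEBi
  have hχ' : ∫ a, χ' (a • x) ∂μ i = ∫ a, χ ((g⁻¹ * a) • x) ∂μ i := by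
    simp [χ', mul_smul]
  rw [hχ']
  linarith [(abs_le.1 hUEBi).1]

end Action

theorem Filter.exists_ultrafilter_le_forall_mem_of_antitone {ι : Type*} {l : Filter ι}
    {s : ℕ → Set ι} (hs : Antitone s) (hfreq : ∀ n, ∃ᶠ i in l, i ∈ s n) :
    ∃ U : Ultrafilter ι, ↑U ≤ l ∧ ∀ n, s n ∈ U := by
  have hbasis := hasBasis_iInf_principal (s := s) hs.directed_ge
  have : (l ⊓ ⨅ n, 𝓟 (s n)).NeBot := inf_neBot_iff_frequently_right.2 fun hp => by
    obtain ⟨n, -, hn⟩ := hbasis.eventually_iff.1 hp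
    exact (hfreq n).mono hn
  obtain ⟨U, hU⟩ := Ultrafilter.exists_le (l ⊓ ⨅ n, 𝓟 (s n))
  exact ⟨U, hU.trans inf_le_left,
    fun n => hU (mem_inf_of_right (hbasis.mem_of_mem trivial))⟩

section Flow

variable {G X ι : Type*} [Group G] [TopologicalSpace G] [MeasurableSpace G] [BorelSpace G]
  [TopologicalSpace X] [CompactSpace X] [T2Space X] [Nonempty X]
  [MulAction G X] [ContinuousSMul G X]

theorem exists_forall_le_of_iSup_liminf_obsDiam_lt {l : Filter ι} {μ : ι → Measure G}
    [∀ i, IsProbabilityMeasure (μ i)] (hUEB : UEBConvergesToInvariance l μ)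
    {d : X → X → ℝ} (hd0 : ∀ x, d x x = 0) (hsymm : ∀ x y, d x y = d y x)
    (htri : ∀ x y z, d x z ≤ d x y + d y z) (hcont : Continuous fun p : X × X => d p.1 p.2)
    {s : ℝ} (hs : ⨆ (α : ℝ) (_ : 0 < α), l.liminf (fun i =>
        ⨆ x : X, obsDiam (fun g h : G => d (g • x) (h • x)) (μ i) α) < ENNReal.ofReal s) :
    ∃ z : X, ∀ g : G, d z (g • z) ≤ s := by
  set D : ℝ → ι → ENNReal := fun α i =>
    ⨆ x : X, obsDiam (fun g h : G => d (g • x) (h • x)) (μ i) α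
  have hDanti : ∀ i, Antitone fun α => D α i := fun i _ _ hαβ =>
    iSup_mono fun _ => obsDiam_antitone _ _ hαβ
  set bad : ℕ → Set ι := fun n => {i | D (1 / (n + 1)) i < ENNReal.ofReal s}
  have hbad : Antitone bad := fun m n hmn i (hi : D _ i < _) =>
    (hDanti i (Nat.one_div_le_one_div hmn)).trans_lt hi
  have hfreq : ∀ n, ∃ᶠ i in l, i ∈ bad n := fun n => frequently_lt_of_liminf_lt (h :=
    (le_iSup₂ (f := fun α (_ : 0 < α) => l.liminf (D α)) _ Nat.one_div_pos_of_nat).trans_lt hs)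
  obtain ⟨U, hUl, hUbad⟩ := exists_ultrafilter_le_forall_mem_of_antitone hbad hfreq
  obtain ⟨x₁⟩ := ‹Nonempty X›
  obtain ⟨z, hz⟩ := exists_memLimitSupport U μ (continuous_id.smul continuous_const :
    Continuous fun g : G => g • x₁)
  refine ⟨z, fun g => le_of_forall_pos_lt_add fun ε hε => ?_⟩
  obtain ⟨α, hα, hev⟩ := ofReal_sub_le_obsDiam_of_memLimitSupport
    (continuous_id.smul continuous_const) hsymm htri hcont hz (hz.smul hUEB hUl g)
    (hd0 _) (hd0 _) hε
  obtain ⟨n, hn⟩ := exists_nat_one_div_lt hα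
  obtain ⟨i, hi, hibad⟩ := (hev.and (hUbad n)).exists
  have : ENNReal.ofReal (d z (g • z) - ε) < ENNReal.ofReal s :=
    calc ENNReal.ofReal (d z (g • z) - ε)
        ≤ obsDiam (fun g h : G => d (g • x₁) (h • x₁)) (μ i) α := hi
      _ ≤ obsDiam (fun g h : G => d (g • x₁) (h • x₁)) (μ i) (1 / (n + 1)) :=
          obsDiam_antitone _ _ hn.le
      _ ≤ D (1 / (n + 1)) i :=
          le_iSup (fun x : X => obsDiam (fun g h : G => d (g • x) (h • x)) (μ i) _) x₁
      _ < ENNReal.ofReal s := hibad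
  linarith [(ENNReal.ofReal_lt_ofReal_iff'.1 this).1]

end Flow

theorem stmt18_general {G X ι : Type*} [Group G] [TopologicalSpace G]
    [MeasurableSpace G] [BorelSpace G]
    [TopologicalSpace X] [CompactSpace X] [T2Space X] [Nonempty X]
    [MulAction G X] [ContinuousSMul G X]
    (l : Filter ι) (μ : ι → Measure G)
    (hprob : ∀ i, IsProbabilityMeasure (μ i))
    (hUEB : UEBConvergesToInvariance l μ)
    (d : X → X → ℝ) (hd0 : ∀ x, d x x = 0) (hsymm : ∀ x y, d x y = d y x)
    (htri : ∀ x y z, d x z ≤ d x y + d y z)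
    (hcont : Continuous (fun p : X × X => d p.1 p.2)) :
    ∃ x₀ : X, ∀ g : G, ENNReal.ofReal (d x₀ (g • x₀)) ≤
      ⨆ (α : ℝ) (_ : 0 < α), l.liminf (fun i =>
        ⨆ x : X, obsDiam (fun g h : G => d (g • x) (h • x)) (μ i) α) := by
  have := hprob
  set D : X → ENNReal := fun z => ⨆ g : G, ENNReal.ofReal (d z (g • z))
  have hD : LowerSemicontinuous D := lowerSemicontinuous_iSup fun g =>
    (ENNReal.continuous_ofReal.comp
      (hcont.comp (continuous_id.prodMk (continuous_const_smul g)))).lowerSemicontinuous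
  obtain ⟨x₀, -, hx₀⟩ := (hD.lowerSemicontinuousOn _).exists_isMinOn Set.univ_nonempty isCompact_univ
  refine ⟨x₀, fun g => (le_iSup (fun g : G => ENNReal.ofReal (d x₀ (g • x₀))) g).trans ?_⟩
  refine le_of_forall_gt_imp_ge_of_dense fun b hb => ?_
  obtain ⟨s, -, hRs, hsb⟩ := ENNReal.lt_iff_exists_real_btwn.1 hb
  obtain ⟨z, hz⟩ := exists_forall_le_of_iSup_liminf_obsDiam_lt hUEB hd0 hsymm htri
    hcont hRs
  calc D x₀ ≤ D z := hx₀ (Set.mem_univ z)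
    _ ≤ ENNReal.ofReal s := iSup_le fun g => ENNReal.ofReal_le_ofReal (hz g)
    _ ≤ b := hsb.le

/-- Corollary 1.3: for a net `(μ i)` UEB-converging to invariance over `G` and a
continuous pseudo-metric `d` on a `G`-flow `X`, there is a point `x₀ ∈ X` whose orbit
has `d`-diameter bounded by
`sup_{α>0} liminf_i sup_{x∈X} ObsDiam(G, d_{G,x}, μ_i; −α)`. -/
theorem stmt18 {G X ι : Type*} [Group G] [TopologicalSpace G] [IsTopologicalGroup G]
    [MeasurableSpace G] [BorelSpace G]
    [TopologicalSpace X] [CompactSpace X] [T2Space X] [Nonempty X]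
    [MeasurableSpace X] [BorelSpace X]
    [MulAction G X] [ContinuousSMul G X]
    (l : Filter ι) [l.NeBot] (μ : ι → Measure G)
    (hprob : ∀ i, IsProbabilityMeasure (μ i))
    (hUEB : UEBConvergesToInvariance l μ)
    (d : X → X → ℝ) (hd0 : ∀ x, d x x = 0) (hsymm : ∀ x y, d x y = d y x)
    (htri : ∀ x y z, d x z ≤ d x y + d y z)
    (hcont : Continuous (fun p : X × X => d p.1 p.2)) :
    ∃ x₀ : X, ∀ g : G, ENNReal.ofReal (d x₀ (g • x₀)) ≤
      ⨆ (α : ℝ) (_ : 0 < α), l.liminf (fun i =>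
        ⨆ x : X, obsDiam (fun g h : G => d (g • x) (h • x)) (μ i) α) :=
  stmt18_general l μ hprob hUEB d hd0 hsymm htri hcont
end

section
/- Let K be a compact group with normalized Haar measure ν_K, and let (μ_n)_{n∈ℕ} be a sequence of Borel probability measures on K such that for every continuous f : K → ℝ and every x ∈ K, |∫ f(xy) dμ_n(y) − ∫ f(y) dμ_n(y)| → 0 as n → ∞. Then μ_n converges weakly to ν_K. -/
/-!
Averaging the defect `x ↦ ∫ f (x * y) dμₙ(y) - ∫ f dμₙ` against `ν` gives, by Fubini and
right-invariance of `ν`, exactly `∫ f dν - ∫ f dμₙ`. The defect tends to `0` pointwise and is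
bounded by `2 ‖f‖∞`, so dominated convergence makes its `ν`-average tend to `0`.
-/

open Filter Topology MeasureTheory

section LeftTranslateAverage

variable {K E : Type*} [Group K] [TopologicalSpace K] [IsTopologicalGroup K] [CompactSpace K]
  [MeasurableSpace K] [BorelSpace K] [NormedAddCommGroup E] [NormedSpace ℝ E] {f : K → E}

theorem stronglyMeasurable_integral_comp_mul (hf : Continuous f) (μ : Measure K) [SFinite μ] :
    StronglyMeasurable fun x => ∫ y, f (x * y) ∂μ :=
  ((HasCompactSupport.of_compactSpace _).stronglyMeasurable_of_prod
    (hf.comp continuous_mul)).integral_prod_right'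

theorem integrable_integral_comp_mul (hf : Continuous f) (μ ν : Measure K) [IsFiniteMeasure μ]
    [IsFiniteMeasure ν] : Integrable (fun x => ∫ y, f (x * y) ∂μ) ν := by
  obtain ⟨C, hC⟩ := hf.bounded_above_of_compact_support (HasCompactSupport.of_compactSpace f)
  refine ⟨(stronglyMeasurable_integral_comp_mul hf μ).aestronglyMeasurable, ?_⟩
  exact .of_bounded (C := C * μ.real Set.univ) <| .of_forall fun x =>
    norm_integral_le_of_norm_le_const (.of_forall fun y => hC (x * y))

theorem integral_integral_comp_mul_of_isMulRightInvariant [CompleteSpace E]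
    (hf : Continuous f) (μ ν : Measure K) [IsProbabilityMeasure μ] [IsFiniteMeasure ν] [ν.IsMulRightInvariant] :
    ∫ x, ∫ y, f (x * y) ∂μ ∂ν = ∫ x, f x ∂ν := by
  rw [integral_integral_swap_of_hasCompactSupport (f := fun x y => f (x * y))
    (hf.comp continuous_mul) (HasCompactSupport.of_compactSpace _)]
  simp_rw [integral_mul_right_eq_self f]
  simp

end LeftTranslateAverage

theorem stmt19_general {K : Type*} [Group K] [TopologicalSpace K] [IsTopologicalGroup K]
    [CompactSpace K] [MeasurableSpace K] [BorelSpace K]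
    (ν : Measure K) [IsProbabilityMeasure ν]
    (hνright : ∀ g : K, ν.map (fun x => x * g) = ν)
    (μ : ℕ → Measure K) (hprob : ∀ n, IsProbabilityMeasure (μ n))
    (h : ∀ f : K → ℝ, Continuous f → ∀ x : K,
      Tendsto (fun n => ∫ y, f (x * y) ∂(μ n) - ∫ y, f y ∂(μ n)) atTop (𝓝 0)) :
    ∀ f : K → ℝ, Continuous f →
      Tendsto (fun n => ∫ y, f y ∂(μ n)) atTop (𝓝 (∫ y, f y ∂ν)) := by
  intro f hf
  have : ν.IsMulRightInvariant := ⟨hνright⟩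
  obtain ⟨C, hC⟩ := hf.bounded_above_of_compact_support (HasCompactSupport.of_compactSpace f)
  have average_defect (n : ℕ) :
      ∫ x, (∫ y, f (x * y) ∂(μ n) - ∫ y, f y ∂(μ n)) ∂ν = ∫ y, f y ∂ν - ∫ y, f y ∂(μ n) := by
    have := hprob n
    rw [integral_sub (integrable_integral_comp_mul hf _ _) (integrable_const _),
      integral_integral_comp_mul_of_isMulRightInvariant hf, integral_const]
    simp
  have defect_le (n : ℕ) (x : K) : ‖∫ y, f (x * y) ∂(μ n) - ∫ y, f y ∂(μ n)‖ ≤ C + C := by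
    have := hprob n
    refine (norm_sub_le _ _).trans (add_le_add ?_ ?_)
    · simpa using norm_integral_le_of_norm_le_const (μ := μ n) (.of_forall fun y => hC (x * y))
    · simpa using norm_integral_le_of_norm_le_const (μ := μ n) (.of_forall hC)
  have average_defect_tendsto := tendsto_integral_of_dominated_convergence (μ := ν)
    (F := fun n x => ∫ y, f (x * y) ∂(μ n) - ∫ y, f y ∂(μ n)) (fun _ => C + C)
    (fun n => ((integrable_integral_comp_mul hf _ _).sub (integrable_const _)).aestronglyMeasurable)
    (integrable_const _) (fun n => .of_forall (defect_le n)) (.of_forall (h f hf))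
  simp only [average_defect, integral_zero] at average_defect_tendsto
  simpa using average_defect_tendsto.const_sub (∫ y, f y ∂ν)

/-- If a sequence of Borel probability measures on a compact group `K` is asymptotically
left-invariant against every continuous function, then it converges weakly to the
normalized Haar measure `ν` of `K`. -/
theorem stmt19 {K : Type*} [Group K] [TopologicalSpace K] [IsTopologicalGroup K]
    [CompactSpace K] [T2Space K] [MeasurableSpace K] [BorelSpace K]
    (ν : Measure K) [IsProbabilityMeasure ν]
    (hνleft : ∀ g : K, ν.map (fun x => g * x) = ν)
    (hνright : ∀ g : K, ν.map (fun x => x * g) = ν)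
    (μ : ℕ → Measure K) (hprob : ∀ n, IsProbabilityMeasure (μ n))
    (h : ∀ f : K → ℝ, Continuous f → ∀ x : K,
      Tendsto (fun n => ∫ y, f (x * y) ∂(μ n) - ∫ y, f y ∂(μ n)) atTop (𝓝 0)) :
    ∀ f : K → ℝ, Continuous f →
      Tendsto (fun n => ∫ y, f y ∂(μ n)) atTop (𝓝 (∫ y, f y ∂ν)) :=
  stmt19_general ν hνright μ hprob h
end
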